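/- arXiv:2209.12651 — 7 statements merged into one kernel-verified Lean document; each statement's English description precedes it below -/
import Mathlib

section
/- Let n ≥ 1 and k ≤ n be natural numbers. A matrix T ∈ ℝ^{n×n} belongs to A_k (i.e., T = (I + RᵀR)⁻¹ for some R ∈ ℝ^{k×n}) if and only if T is symmetric, positive definite, I − T is positive semidefinite, and the eigenspace of T for the eigenvalue 1 has dimension at least n − k. -/
open Matrix

set_option maxHeartbeats 1000000

/-- The set of bilevel estimators `A_k = { (I + RᵀR)⁻¹ : R ∈ ℝ^{k×n} }`. -/
def bilevelSet (k n : ℕ) : Set (Matrix (Fin n) (Fin n) ℝ) :=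
  {T | ∃ R : Matrix (Fin k) (Fin n) ℝ, T = (1 + Rᵀ * R)⁻¹}

private lemma aux_QtQ {n k : ℕ} (μ c : Fin n → ℝ) (f : {i // μ i ≠ 1} ↪ Fin k)
    (Q : Matrix (Fin k) (Fin n) ℝ)
    (hQ : Q = fun j i => if h : μ i ≠ 1 then (if f ⟨i, h⟩ = j then c i else 0) else 0) :
    Qᵀ * Q = diagonal (fun i => if μ i ≠ 1 then c i ^ 2 else 0) := by
  ext i i'
  rw [Matrix.mul_apply]
  simp only [transpose_apply]
  simp only [hQ]
  by_cases h : μ i ≠ 1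
  · by_cases h' : μ i' ≠ 1
    · simp only [dif_pos h, dif_pos h', ite_mul, mul_ite, zero_mul, mul_zero]
      rw [Finset.sum_ite_eq (Finset.univ) (f ⟨i', h'⟩)
        (fun j => if f ⟨i, h⟩ = j then c i * c i' else 0)]
      simp only [Finset.mem_univ, if_true]
      by_cases hii : i = i'
      · subst hii
        simp [Matrix.diagonal_apply_eq, h, pow_two]
      · have : f ⟨i, h⟩ ≠ f ⟨i', h'⟩ := by
          intro hc
          exact hii (congrArg Subtype.val (f.injective hc))
        rw [if_neg this, Matrix.diagonal_apply_ne _ hii]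
    · have : i ≠ i' := fun hc => h' (hc ▸ h)
      simp [dif_neg h', Matrix.diagonal_apply_ne _ this]
  · simp only [dif_neg h, zero_mul, Finset.sum_const_zero]
    rcases eq_or_ne i i' with rfl | hne
    · simp [Matrix.diagonal_apply_eq, not_not.mp h]
    · rw [Matrix.diagonal_apply_ne _ hne]

/-- Expressivity of bilevel learning: `T ∈ A_k` iff `T` is symmetric,
positive definite, `I − T` is positive semidefinite, and the eigenspace of `T` for
the eigenvalue `1` has dimension at least `n − k`. -/
theorem expressivity_bilevel (n k : ℕ) (hn : 1 ≤ n) (hk : k ≤ n)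
    (T : Matrix (Fin n) (Fin n) ℝ) :
    T ∈ bilevelSet k n ↔
      T.IsSymm ∧ T.PosDef ∧ (1 - T).PosSemidef ∧
      n - k ≤ Module.finrank ℝ (Module.End.eigenspace (Matrix.toLin' T) 1) := by
  classical
  constructor
  · rintro ⟨R, rfl⟩
    set T := (1 + Rᵀ * R)⁻¹ with hTdef
    have hM : (Rᵀ * R).PosSemidef := by
      simpa [Matrix.conjTranspose_eq_transpose_of_trivial] using
        Matrix.posSemidef_conjTranspose_mul_self R
    have hS : (1 + Rᵀ * R).PosDef := Matrix.PosDef.add_posSemidef Matrix.PosDef.one hM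
    have hT : T.PosDef := hS.inv
    have hdet : IsUnit (1 + Rᵀ * R).det := isUnit_iff_ne_zero.2 hS.det_pos.ne'
    have hST : (1 + Rᵀ * R) * T = 1 := Matrix.mul_nonsing_inv _ hdet
    have hTS : T * (1 + Rᵀ * R) = 1 := Matrix.nonsing_inv_mul _ hdet
    refine ⟨?_, hT, ?_, ?_⟩
    · have h := hT.isHermitian
      rwa [Matrix.IsHermitian, Matrix.conjTranspose_eq_transpose_of_trivial] at h
    · refine Matrix.PosSemidef.of_dotProduct_mulVec_nonneg ?_ ?_
      · exact Matrix.isHermitian_one.sub hT.isHermitian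
      · intro x
        set y := T *ᵥ x with hy
        have hx : x = (1 + Rᵀ * R) *ᵥ y := by
          rw [hy, Matrix.mulVec_mulVec, hST, Matrix.one_mulVec]
        have key : star x ⬝ᵥ ((1 - T) *ᵥ x)
            = y ⬝ᵥ (Rᵀ *ᵥ (R *ᵥ y)) + (Rᵀ *ᵥ (R *ᵥ y)) ⬝ᵥ (Rᵀ *ᵥ (R *ᵥ y)) := by
          rw [Matrix.sub_mulVec, Matrix.one_mulVec, star_trivial, ← hy]
          rw [hx]
          simp only [Matrix.add_mulVec, Matrix.one_mulVec, ← Matrix.mulVec_mulVec]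
          set w := Rᵀ *ᵥ (R *ᵥ y)
          rw [add_sub_cancel_left, add_dotProduct]
        rw [key]
        have h1 : y ⬝ᵥ (Rᵀ *ᵥ (R *ᵥ y)) = (R *ᵥ y) ⬝ᵥ (R *ᵥ y) := by
          rw [Matrix.dotProduct_mulVec, Matrix.vecMul_transpose]
        have h2 : ∀ (m : ℕ) (v : Fin m → ℝ), (0:ℝ) ≤ v ⬝ᵥ v := fun m v =>
          Finset.sum_nonneg fun i _ => mul_self_nonneg _
        rw [h1]
        exact add_nonneg (h2 _ _) (h2 _ _)
    · have hker : LinearMap.ker (Matrix.mulVecLin R) ≤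
          Module.End.eigenspace (Matrix.toLin' T) 1 := by
        intro x hx
        rw [LinearMap.mem_ker, Matrix.mulVecLin_apply] at hx
        rw [Module.End.mem_eigenspace_iff, Matrix.toLin'_apply, one_smul]
        have hSx : (1 + Rᵀ * R) *ᵥ x = x := by
          rw [Matrix.add_mulVec, Matrix.one_mulVec, ← Matrix.mulVec_mulVec, hx,
            Matrix.mulVec_zero, add_zero]
        conv_lhs => rw [← hSx]
        rw [Matrix.mulVec_mulVec, hTS, Matrix.one_mulVec]
      have h1 := LinearMap.finrank_range_add_finrank_ker (Matrix.mulVecLin R)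
      have h2 : Module.finrank ℝ (LinearMap.range (Matrix.mulVecLin R)) ≤ k := by
        simpa using Submodule.finrank_le (LinearMap.range (Matrix.mulVecLin R))
      have h3 : Module.finrank ℝ (Fin n → ℝ) = n := by simp
      have h4 := Submodule.finrank_mono hker
      omega
  · rintro ⟨hsymm, hpd, hpsd, hdim⟩
    have hH : T.IsHermitian := by
      rwa [Matrix.IsHermitian, Matrix.conjTranspose_eq_transpose_of_trivial]
    set U : Matrix (Fin n) (Fin n) ℝ := (hH.eigenvectorUnitary : Matrix (Fin n) (Fin n) ℝ)
      with hU
    set μ := hH.eigenvalues with hμ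
    have hUUt : U * Uᵀ = 1 := by
      rw [← Matrix.conjTranspose_eq_transpose_of_trivial, ← Matrix.star_eq_conjTranspose]
      exact (Matrix.mem_unitaryGroup_iff).mp hH.eigenvectorUnitary.2
    have hUtU : Uᵀ * U = 1 := by
      rw [← Matrix.conjTranspose_eq_transpose_of_trivial, ← Matrix.star_eq_conjTranspose]
      exact (Matrix.mem_unitaryGroup_iff').mp hH.eigenvectorUnitary.2
    have hdetU : IsUnit U.det := by
      apply IsUnit.of_mul_eq_one Uᵀ.det
      rw [← Matrix.det_mul, hUUt, Matrix.det_one]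
    have hdetUt : IsUnit Uᵀ.det := by
      apply IsUnit.of_mul_eq_one U.det
      rw [← Matrix.det_mul, hUtU, Matrix.det_one]
    have hspec : T = U * diagonal μ * Uᵀ := by
      have := hH.spectral_theorem
      rwa [Unitary.conjStarAlgAut_apply, Matrix.star_eq_conjTranspose, Matrix.conjTranspose_eq_transpose_of_trivial] at this
    have hμpos : ∀ i, 0 < μ i := fun i => hpd.eigenvalues_pos i
    have hμle : ∀ i, μ i ≤ 1 := by
      intro i
      set x : Fin n → ℝ := ⇑(hH.eigenvectorBasis i) with hx
      have hxx : x ⬝ᵥ x = 1 := by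
        have hn1 : ‖hH.eigenvectorBasis i‖ = 1 := hH.eigenvectorBasis.orthonormal.1 i
        have h2 : @inner ℝ _ _ (hH.eigenvectorBasis i) (hH.eigenvectorBasis i) = 1 := by
          rw [real_inner_self_eq_norm_sq, hn1]; norm_num
        rw [← h2, PiLp.inner_apply]
        simp only [dotProduct, RCLike.inner_apply, starRingEnd_apply, star_trivial]
        rfl
      have h := hpsd.dotProduct_mulVec_nonneg x
      rw [star_trivial, Matrix.sub_mulVec, Matrix.one_mulVec, dotProduct_sub,
        hH.mulVec_eigenvectorBasis, dotProduct_smul, hxx] at h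
      simp only [smul_eq_mul, mul_one] at h
      linarith
    -- cardinality bound
    have hcard : Fintype.card {i // μ i ≠ 1} ≤ k := by
      have hE : Module.End.eigenspace (Matrix.toLin' T) 1
          = LinearMap.ker (Matrix.mulVecLin (T - 1)) := by
        ext x
        rw [Module.End.mem_eigenspace_iff, LinearMap.mem_ker, Matrix.mulVecLin_apply,
          Matrix.toLin'_apply, one_smul, Matrix.sub_mulVec, Matrix.one_mulVec, sub_eq_zero]
      have h1 := LinearMap.finrank_range_add_finrank_ker (Matrix.mulVecLin (T - 1))
      have h3 : Module.finrank ℝ (Fin n → ℝ) = n := by simp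
      have hrank : (T - 1).rank ≤ k := by
        have h4 : (T - 1).rank
            = Module.finrank ℝ (LinearMap.range (Matrix.mulVecLin (T - 1))) := rfl
        rw [hE] at hdim
        omega
      have hsub : T - 1 = U * diagonal (fun i => μ i - 1) * Uᵀ := by
        have h1' : (1 : Matrix (Fin n) (Fin n) ℝ) = U * 1 * Uᵀ := by rw [Matrix.mul_one, hUUt]
        rw [hspec]
        conv_lhs => rw [h1']
        rw [← Matrix.sub_mul, ← Matrix.mul_sub, ← Matrix.diagonal_one, Matrix.diagonal_sub]
      have hrr : (T - 1).rank = Fintype.card {i // μ i - 1 ≠ 0} := by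
        rw [hsub, Matrix.rank_mul_eq_left_of_isUnit_det Uᵀ _ hdetUt,
          Matrix.rank_mul_eq_right_of_isUnit_det U _ hdetU, Matrix.rank_diagonal]
      have hcardeq : Fintype.card {i // μ i - 1 ≠ 0} = Fintype.card {i // μ i ≠ 1} :=
        Fintype.card_congr (Equiv.subtypeEquivRight fun i => by rw [sub_ne_zero])
      omega
    obtain ⟨f⟩ : Nonempty ({i // μ i ≠ 1} ↪ Fin k) :=
      Function.Embedding.nonempty_of_card_le (by simpa using hcard)
    set c : Fin n → ℝ := fun i => Real.sqrt ((μ i)⁻¹ - 1) with hc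
    have hinv1 : ∀ i, 0 ≤ (μ i)⁻¹ - 1 := by
      intro i
      have h1 : μ i * (μ i)⁻¹ = 1 := mul_inv_cancel₀ (hμpos i).ne'
      nlinarith [hμpos i, hμle i]
    have hsq : ∀ i, c i ^ 2 = (μ i)⁻¹ - 1 := fun i => Real.sq_sqrt (hinv1 i)
    set Q : Matrix (Fin k) (Fin n) ℝ :=
      fun j i => if h : μ i ≠ 1 then (if f ⟨i, h⟩ = j then c i else 0) else 0 with hQdef
    have hQ : Qᵀ * Q = diagonal (fun i => if μ i ≠ 1 then c i ^ 2 else 0) :=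
      aux_QtQ μ c f Q hQdef
    refine ⟨Q * Uᵀ, ?_⟩
    have hRtR : (Q * Uᵀ)ᵀ * (Q * Uᵀ)
        = U * diagonal (fun i => if μ i ≠ 1 then c i ^ 2 else 0) * Uᵀ := by
      rw [Matrix.transpose_mul, Matrix.transpose_transpose, Matrix.mul_assoc,
        ← Matrix.mul_assoc Qᵀ Q Uᵀ, hQ, ← Matrix.mul_assoc]
    have hsum : 1 + (Q * Uᵀ)ᵀ * (Q * Uᵀ)
        = U * diagonal (fun i => 1 + (if μ i ≠ 1 then c i ^ 2 else 0)) * Uᵀ := by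
      rw [hRtR]
      have h1' : (1 : Matrix (Fin n) (Fin n) ℝ) = U * 1 * Uᵀ := by rw [Matrix.mul_one, hUUt]
      conv_lhs => rw [h1']
      rw [← Matrix.add_mul, ← Matrix.mul_add, ← Matrix.diagonal_one, Matrix.diagonal_add]
    have hTmul : T * (1 + (Q * Uᵀ)ᵀ * (Q * Uᵀ)) = 1 := by
      rw [hsum, hspec]
      rw [Matrix.mul_assoc (U * diagonal μ) Uᵀ _, ← Matrix.mul_assoc Uᵀ _ Uᵀ,
        ← Matrix.mul_assoc Uᵀ U _, hUtU, Matrix.one_mul,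
        ← Matrix.mul_assoc (U * diagonal μ) _ Uᵀ, Matrix.mul_assoc U (diagonal μ) _,
        Matrix.diagonal_mul_diagonal]
      have : (fun i => μ i * (1 + (if μ i ≠ 1 then c i ^ 2 else 0))) = fun _ => (1:ℝ) := by
        funext i
        by_cases h : μ i ≠ 1
        · rw [if_pos h, hsq i]
          have h2 : μ i * (1 + ((μ i)⁻¹ - 1)) = μ i * (μ i)⁻¹ := by ring
          rw [h2, mul_inv_cancel₀ (hμpos i).ne']
        · rw [if_neg h, not_not.mp h]
          norm_num
      rw [this, Matrix.diagonal_one, Matrix.mul_one, hUUt]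
    exact (Matrix.inv_eq_left_inv hTmul).symm
end

section
/- Let n ≥ 1 and k ≤ n be natural numbers, let N ≥ 2 be an even natural number and ω > 0. A matrix U ∈ ℝ^{n×n} belongs to B_{N,k,ω} if and only if U is symmetric, the eigenspace of U for the eigenvalue ρ_{N,ω} = 1 − (1 − ω)^N has dimension at least n − k, and ρ_{N,ω}·I − U is positive semidefinite. -/
open Matrix

/-- The set of unrolling estimators
`B_{N,k,ω} = { (I + RᵀR)⁻¹(I − (I − ω(I + RᵀR))^N) : R ∈ ℝ^{k×n} }`. -/
def unrollingSet (N k n : ℕ) (ω : ℝ) : Set (Matrix (Fin n) (Fin n) ℝ) :=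
  {U | ∃ R : Matrix (Fin k) (Fin n) ℝ,
    U = (1 + Rᵀ * R)⁻¹ * (1 - (1 - ω • (1 + Rᵀ * R)) ^ N)}


open Finset

/-- `f_{ω,N}(d) = ω ∑_{j<N} (1-ωd)^j`, so that `d * f d = 1 - (1-ωd)^N`. -/
noncomputable def fpoly (ω : ℝ) (N : ℕ) (d : ℝ) : ℝ :=
  ω * ∑ j ∈ Finset.range N, (1 - ω * d) ^ j

lemma geom_aux (t : ℝ) (N : ℕ) :
    (1 - t) * ∑ j ∈ Finset.range N, t ^ j = 1 - t ^ N := by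
  linear_combination (-1 : ℝ) * geom_sum_mul t N

lemma fpoly_one (ω : ℝ) (N : ℕ) : fpoly ω N 1 = 1 - (1 - ω) ^ N := by
  have h := geom_aux (1 - ω) N
  simp only [fpoly, mul_one]
  linarith

lemma mul_fpoly (ω : ℝ) (N : ℕ) (d : ℝ) :
    d * fpoly ω N d = 1 - (1 - ω * d) ^ N := by
  have h := geom_aux (1 - ω * d) N
  simp only [fpoly]
  linear_combination h

lemma deriv_identity (M : ℕ) (t : ℝ) :
    (∑ i ∈ Finset.range M, ((i : ℝ) + 1) * t ^ i) * (t - 1) ^ 2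
      = (M : ℝ) * t ^ (M + 1) - ((M : ℝ) + 1) * t ^ M + 1 := by
  induction M with
  | zero => simp
  | succ m ih =>
    rw [Finset.sum_range_succ, add_mul, ih]
    push_cast
    ring

lemma gsum_mono (N : ℕ) (hN : Even N) :
    Monotone (fun t : ℝ => ∑ j ∈ Finset.range N, t ^ j) := by
  have hdiff : ∀ t : ℝ, HasDerivAt (fun t : ℝ => ∑ j ∈ Finset.range N, t ^ j)
      (∑ j ∈ Finset.range N, (j : ℝ) * t ^ (j - 1)) t := by
    intro t
    exact HasDerivAt.fun_sum fun j _ => hasDerivAt_pow j t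
  apply monotone_of_deriv_nonneg
  · exact fun t => (hdiff t).differentiableAt
  · intro t
    rw [(hdiff t).deriv]
    -- rewrite the sum in shifted form
    obtain ⟨M, hM⟩ : ∃ M, N = M + 1 ∨ N = 0 := by
      rcases N with _ | M
      · exact ⟨0, Or.inr rfl⟩
      · exact ⟨M, Or.inl rfl⟩
    rcases hM with hM | hM
    · subst hM
      rw [Finset.sum_range_succ']
      simp only [Nat.cast_zero, zero_mul, add_zero, Nat.add_sub_cancel]
      rcases le_or_gt 0 t with ht | ht
      · apply Finset.sum_nonneg
        intro i _
        push_cast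
        positivity
      · have hid := deriv_identity M t
        have hModd : Odd M := by
          rcases Nat.even_or_odd M with h | h
          · exfalso
            rw [Nat.even_add_one] at hN
            exact hN (h : Even M)
          · exact h
        have h1 : (0:ℝ) ≤ (M : ℝ) * t ^ (M + 1) :=
          mul_nonneg (by positivity) (hN.pow_nonneg t)
        have h2 : t ^ M ≤ 0 := Odd.pow_nonpos hModd ht.le
        have h2' : ((M:ℝ) + 1) * t ^ M ≤ 0 :=
          mul_nonpos_of_nonneg_of_nonpos (by positivity) h2
        have ht1 : t - 1 ≠ 0 := by intro h; nlinarith [h]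
        have h3 : (0:ℝ) < (t - 1) ^ 2 := by positivity
        by_contra hneg
        push_neg at hneg
        push_cast at hneg
        have hprod := mul_neg_of_neg_of_pos hneg h3
        linarith [hid, h1, h2', hprod]
    · subst hM; simp

lemma fpoly_le (ω : ℝ) (hω : 0 < ω) (N : ℕ) (hN : Even N) (d : ℝ) (hd : 1 ≤ d) :
    fpoly ω N d ≤ 1 - (1 - ω) ^ N := by
  rw [← fpoly_one ω N]
  unfold fpoly
  apply mul_le_mul_of_nonneg_left _ hω.le
  apply gsum_mono N hN
  nlinarith

lemma fpoly_surj (ω : ℝ) (hω : 0 < ω) (N : ℕ) (hN : Even N) (hN2 : 2 ≤ N)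
    (μ : ℝ) (hμ : μ ≤ 1 - (1 - ω) ^ N) :
    ∃ d : ℝ, 1 ≤ d ∧ fpoly ω N d = μ := by
  set d₀ : ℝ := max 1 ((|μ| / ω + 2) / ω) with hd₀
  have h1 : (1:ℝ) ≤ d₀ := le_max_left _ _
  have h1' : (0:ℝ) < d₀ := lt_of_lt_of_le one_pos h1
  have h2 : (|μ| / ω + 2) / ω ≤ d₀ := le_max_right _ _
  have h3 : |μ| / ω + 2 ≤ ω * d₀ := by
    rw [div_le_iff₀ hω] at h2; linarith [h2]
  have h4 : |μ| ≤ ω * (ω * d₀ - 2) := by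
    have : |μ| / ω ≤ ω * d₀ - 2 := by linarith
    calc |μ| = ω * (|μ| / ω) := by field_simp
    _ ≤ ω * (ω * d₀ - 2) := by nlinarith
  have hb : (1:ℝ) ≤ ω * d₀ - 1 := by
    have : (0:ℝ) ≤ |μ| / ω := by positivity
    linarith
  -- (1 - ω d₀)^N = (ω d₀ - 1)^N ≥ (ω d₀ - 1)^2
  have hpow : (ω * d₀ - 1) ^ 2 ≤ (1 - ω * d₀) ^ N := by
    have he : (1 - ω * d₀) ^ N = (ω * d₀ - 1) ^ N := by
      rw [show (1 - ω * d₀) = -(ω * d₀ - 1) by ring, hN.neg_pow]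
    rw [he]
    exact pow_le_pow_right₀ hb hN2
  have hfd : fpoly ω N d₀ ≤ μ := by
    have hkey := mul_fpoly ω N d₀
    have : 1 - (1 - ω * d₀) ^ N ≤ μ * d₀ := by
      have habs : -|μ| ≤ μ := neg_abs_le μ
      nlinarith
    have := hkey ▸ this
    nlinarith [this]
  -- IVT
  have hcont : ContinuousOn (fpoly ω N) (Set.Icc 1 d₀) := by
    apply Continuous.continuousOn
    unfold fpoly
    continuity
  have hmem : μ ∈ Set.Icc (fpoly ω N d₀) (fpoly ω N 1) := by
    constructor
    · exact hfd
    · rw [fpoly_one]; exact hμ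
  obtain ⟨c, hc, hfc⟩ := intermediate_value_Icc' h1 hcont hmem
  exact ⟨c, hc.1, hfc⟩

open Matrix

variable {n : ℕ}

lemma conj_mul_conj (V : Matrix (Fin n) (Fin n) ℝ) (h2 : Vᴴ * V = 1)
    (A B : Matrix (Fin n) (Fin n) ℝ) :
    (V * A * Vᴴ) * (V * B * Vᴴ) = V * (A * B) * Vᴴ := by
  simp only [mul_assoc]
  rw [← mul_assoc Vᴴ V (B * Vᴴ), h2, one_mul]

/-- Conjugation by a unitary matrix composed with `diagonal`, as an algebra homomorphism. -/
noncomputable def conjAlgHom (V : Matrix (Fin n) (Fin n) ℝ)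
    (h1 : V * Vᴴ = 1) (h2 : Vᴴ * V = 1) :
    ((Fin n) → ℝ) →ₐ[ℝ] Matrix (Fin n) (Fin n) ℝ where
  toFun d := V * diagonal d * Vᴴ
  map_one' := by
    show V * diagonal (1 : Fin n → ℝ) * Vᴴ = 1
    have hone : diagonal (1 : Fin n → ℝ) = 1 := diagonal_one
    rw [hone, mul_one, h1]
  map_mul' a b := by
    have := conj_mul_conj V h2 (diagonal a) (diagonal b)
    rw [diagonal_mul_diagonal] at this
    exact this.symm
  map_zero' := by
    show V * diagonal (0 : Fin n → ℝ) * Vᴴ = 0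
    have hz : diagonal (0 : Fin n → ℝ) = 0 := diagonal_zero
    rw [hz, mul_zero, zero_mul]
  map_add' a b := by
    show V * diagonal (a + b) * Vᴴ = V * diagonal a * Vᴴ + V * diagonal b * Vᴴ
    have ha : diagonal (a + b) = diagonal a + diagonal b := (diagonal_add a b).symm
    rw [ha, mul_add, add_mul]
  commutes' r := by
    rw [Matrix.algebraMap_eq_diagonal]
    have hc : diagonal ((algebraMap ℝ (Fin n → ℝ)) r) = r • (1 : Matrix (Fin n) (Fin n) ℝ) := by
      ext i j
      by_cases h : i = j
      · subst h
        simp [Matrix.diagonal_apply_eq, Matrix.one_apply_eq, Pi.algebraMap_apply]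
      · simp [Matrix.diagonal_apply_ne _ h, Matrix.one_apply_ne h, h]
    show V * diagonal ((algebraMap ℝ (Fin n → ℝ)) r) * Vᴴ = _
    rw [hc, mul_smul_comm, smul_mul_assoc, mul_one, h1]

lemma conjAlgHom_apply (V : Matrix (Fin n) (Fin n) ℝ) (h1 : V * Vᴴ = 1) (h2 : Vᴴ * V = 1)
    (d : Fin n → ℝ) : conjAlgHom V h1 h2 d = V * diagonal d * Vᴴ := rfl

lemma conjAlgHom_posSemidef (V : Matrix (Fin n) (Fin n) ℝ) (h1 : V * Vᴴ = 1) (h2 : Vᴴ * V = 1)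
    (d : Fin n → ℝ) (hd : ∀ i, 0 ≤ d i) : (conjAlgHom V h1 h2 d).PosSemidef := by
  rw [conjAlgHom_apply]
  exact (PosSemidef.diagonal hd).mul_mul_conjTranspose_same V

lemma conjAlgHom_entry_nonneg (V : Matrix (Fin n) (Fin n) ℝ) (h1 : V * Vᴴ = 1) (h2 : Vᴴ * V = 1)
    (d : Fin n → ℝ) (hd : (conjAlgHom V h1 h2 d).PosSemidef) : ∀ i, 0 ≤ d i := by
  have key : diagonal d = Vᴴ * (conjAlgHom V h1 h2 d) * V := by
    rw [conjAlgHom_apply]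
    simp only [mul_assoc, h2, mul_one]
    rw [← mul_assoc Vᴴ V, h2, one_mul]
  have : (diagonal d).PosSemidef := by
    rw [key]
    exact hd.conjTranspose_mul_mul_same V
  exact posSemidef_diagonal_iff.mp this

lemma conjAlgHom_isSymm (V : Matrix (Fin n) (Fin n) ℝ) (h1 : V * Vᴴ = 1) (h2 : Vᴴ * V = 1)
    (d : Fin n → ℝ) : (conjAlgHom V h1 h2 d).IsSymm := by
  rw [conjAlgHom_apply, Matrix.IsSymm, ← conjTranspose_eq_transpose_of_trivial]
  rw [conjTranspose_mul, conjTranspose_mul, conjTranspose_conjTranspose,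
    diagonal_conjTranspose]
  simp [mul_assoc]

/-- The master functional-calculus computation. -/
lemma conjAlgHom_geom (V : Matrix (Fin n) (Fin n) ℝ) (h1 : V * Vᴴ = 1) (h2 : Vᴴ * V = 1)
    (d : Fin n → ℝ) (ω : ℝ) (N : ℕ) :
    ω • ∑ j ∈ Finset.range N, (1 - ω • conjAlgHom V h1 h2 d) ^ j
      = conjAlgHom V h1 h2 (fun i => ω * ∑ j ∈ Finset.range N, (1 - ω * d i) ^ j) := by
  set Φ := conjAlgHom V h1 h2 with hΦ
  have step1 : (1 : Matrix (Fin n) (Fin n) ℝ) - ω • Φ d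
      = Φ ((1 : (Fin n) → ℝ) - ω • d) := by
    rw [_root_.map_sub, _root_.map_one, _root_.map_smul]
  calc ω • ∑ j ∈ Finset.range N, (1 - ω • Φ d) ^ j
      = ω • ∑ j ∈ Finset.range N, Φ (((1 : (Fin n) → ℝ) - ω • d) ^ j) := by
        rw [step1]
        congr 1
        exact Finset.sum_congr rfl fun j _ => (map_pow Φ _ j).symm
    _ = Φ (ω • ∑ j ∈ Finset.range N, ((1 : (Fin n) → ℝ) - ω • d) ^ j) := by
        rw [_root_.map_smul, map_sum]
    _ = Φ (fun i => ω * ∑ j ∈ Finset.range N, (1 - ω * d i) ^ j) := by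
        congr 1
        funext i
        simp [Finset.sum_apply]

open Matrix

variable {n k : ℕ}

lemma matrix_sum_mulVec {ι : Type*} (s : Finset ι) (f : ι → Matrix (Fin n) (Fin n) ℝ)
    (x : Fin n → ℝ) : (∑ j ∈ s, f j) *ᵥ x = ∑ j ∈ s, f j *ᵥ x := by
  induction s using Finset.cons_induction with
  | empty => simp [Matrix.zero_mulVec]
  | cons a s ha ih => simp [Finset.sum_cons, add_mulVec, ih]

lemma inv_geom_formula (A : Matrix (Fin n) (Fin n) ℝ) (hA : IsUnit A.det) (ω : ℝ) (N : ℕ) :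
    A⁻¹ * (1 - (1 - ω • A) ^ N) = ω • ∑ j ∈ Finset.range N, (1 - ω • A) ^ j := by
  set S : Matrix (Fin n) (Fin n) ℝ := ∑ j ∈ Finset.range N, (1 - ω • A) ^ j with hS
  have hcomm : Commute A S := by
    apply Commute.sum_right
    intro j _
    exact ((Commute.one_right A).sub_right ((Commute.refl A).smul_right ω)).pow_right j
  have hgeom : S * ((1 - ω • A) - 1) = (1 - ω • A) ^ N - 1 := geom_sum_mul _ N
  have hgeom' : S * (ω • A) = 1 - (1 - ω • A) ^ N := by
    have h1 : (1 - ω • A) - 1 = -(ω • A) := sub_sub_cancel_left 1 (ω • A)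
    rw [h1, mul_neg, neg_eq_iff_eq_neg] at hgeom
    rw [hgeom, neg_sub]
  calc A⁻¹ * (1 - (1 - ω • A) ^ N) = A⁻¹ * (S * (ω • A)) := by rw [hgeom']
    _ = ω • (A⁻¹ * (S * A)) := by
        rw [mul_smul_comm, mul_smul_comm]
    _ = ω • (A⁻¹ * (A * S)) := by rw [hcomm.eq]
    _ = ω • ((A⁻¹ * A) * S) := by rw [mul_assoc]
    _ = ω • S := by rw [Matrix.nonsing_inv_mul A hA, one_mul]

lemma eig_vec_formula (A : Matrix (Fin n) (Fin n) ℝ) (ω : ℝ) (N : ℕ) (x : Fin n → ℝ)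
    (hx : A *ᵥ x = x) :
    (ω • ∑ j ∈ Finset.range N, (1 - ω • A) ^ j) *ᵥ x
      = (ω * ∑ j ∈ Finset.range N, (1 - ω) ^ j) • x := by
  have hone : (1 - ω • A) *ᵥ x = (1 - ω) • x := by
    rw [sub_mulVec, Matrix.one_mulVec, smul_mulVec, hx, sub_smul, one_smul]
  have hpow : ∀ j : ℕ, ((1 - ω • A) ^ j) *ᵥ x = ((1 - ω) ^ j) • x := by
    intro j
    induction j with
    | zero => simp [Matrix.one_mulVec]
    | succ m ih =>
      rw [pow_succ, ← Matrix.mulVec_mulVec, hone, Matrix.mulVec_smul, ih, pow_succ, smul_smul,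
        mul_comm]
  rw [Matrix.smul_mulVec, matrix_sum_mulVec]
  rw [Finset.sum_congr rfl fun j _ => hpow j, ← Finset.sum_smul, smul_smul]

lemma omega_geom_sum (ω : ℝ) (N : ℕ) :
    ω * ∑ j ∈ Finset.range N, (1 - ω) ^ j = 1 - (1 - ω) ^ N := by
  have h := geom_aux (1 - ω) N
  linear_combination h

section Forward

open Matrix

lemma forward_dir {n k N : ℕ} (hk : k ≤ n) (hN : Even N) (ω : ℝ) (hω : 0 < ω)
    (U : Matrix (Fin n) (Fin n) ℝ) (hU : U ∈ unrollingSet N k n ω) :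
    U.IsSymm ∧
      n - k ≤ Module.finrank ℝ
        (Module.End.eigenspace (Matrix.toLin' U) (1 - (1 - ω) ^ N)) ∧
      ((1 - (1 - ω) ^ N) • (1 : Matrix (Fin n) (Fin n) ℝ) - U).PosSemidef := by
  obtain ⟨R, hUdef⟩ := hU
  set ρ : ℝ := 1 - (1 - ω) ^ N with hρ
  set A : Matrix (Fin n) (Fin n) ℝ := 1 + Rᵀ * R with hAdef
  have hRt : Rᵀ = Rᴴ := (conjTranspose_eq_transpose_of_trivial R).symm
  have hpsd : (Rᵀ * R).PosSemidef := by
    rw [hRt]; exact posSemidef_conjTranspose_mul_self R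
  have hPD : A.PosDef := Matrix.PosDef.one.add_posSemidef hpsd
  have hdet : IsUnit A.det := isUnit_iff_ne_zero.mpr hPD.det_pos.ne'
  have hU2 : U = ω • ∑ j ∈ Finset.range N, (1 - ω • A) ^ j :=
    hUdef.trans (inv_geom_formula A hdet ω N)
  -- spectral decomposition of A
  have hH : A.IsHermitian := hPD.isHermitian
  set V : Matrix (Fin n) (Fin n) ℝ := (hH.eigenvectorUnitary : Matrix (Fin n) (Fin n) ℝ) with hV
  have h1 : V * Vᴴ = 1 := by
    have := Matrix.mem_unitaryGroup_iff.mp hH.eigenvectorUnitary.2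
    rwa [Matrix.star_eq_conjTranspose] at this
  have h2 : Vᴴ * V = 1 := by
    have := Matrix.mem_unitaryGroup_iff'.mp hH.eigenvectorUnitary.2
    rwa [Matrix.star_eq_conjTranspose] at this
  set d : Fin n → ℝ := hH.eigenvalues with hd
  have hspec : A = conjAlgHom V h1 h2 d := by
    rw [conjAlgHom_apply]
    have := hH.spectral_theorem
    rwa [Unitary.conjStarAlgAut_apply, Matrix.star_eq_conjTranspose, RCLike.ofReal_real_eq_id, Function.id_comp] at this
  have hd1 : ∀ i, 1 ≤ d i := by
    have hps : (conjAlgHom V h1 h2 (fun i => d i - 1)).PosSemidef := by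
      have he : conjAlgHom V h1 h2 (fun i => d i - 1) = Rᵀ * R := by
        have hsub : (fun i => d i - 1) = d - (1 : Fin n → ℝ) := by funext i; simp
        rw [hsub, _root_.map_sub, _root_.map_one, ← hspec]
        rw [hAdef, add_sub_cancel_left]
      rw [he]; exact hpsd
    intro i
    have := conjAlgHom_entry_nonneg V h1 h2 _ hps i
    linarith
  have hUΦ : U = conjAlgHom V h1 h2 (fun i => fpoly ω N (d i)) := by
    rw [hU2, hspec, conjAlgHom_geom]
    rfl
  refine ⟨?_, ?_, ?_⟩
  · rw [hUΦ]; exact conjAlgHom_isSymm V h1 h2 _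
  · -- eigenspace dimension
    have hker : LinearMap.ker (Matrix.toLin' R) ≤
        Module.End.eigenspace (Matrix.toLin' U) ρ := by
      intro x hx
      have hRx : R *ᵥ x = 0 := by
        have := hx
        rwa [LinearMap.mem_ker, Matrix.toLin'_apply] at this
      have hAx : A *ᵥ x = x := by
        rw [hAdef, add_mulVec, Matrix.one_mulVec, ← Matrix.mulVec_mulVec, hRx,
          Matrix.mulVec_zero, add_zero]
      rw [Module.End.mem_eigenspace_iff, Matrix.toLin'_apply, hU2,
        eig_vec_formula A ω N x hAx, omega_geom_sum]
    have hle := Submodule.finrank_mono hker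
    have hrk := LinearMap.finrank_range_add_finrank_ker (Matrix.toLin' R)
    have hranle : Module.finrank ℝ (LinearMap.range (Matrix.toLin' R)) ≤ k := by
      refine le_trans (Submodule.finrank_le _) ?_
      simp [Module.finrank_fintype_fun_eq_card]
    have hdom : Module.finrank ℝ (Fin n → ℝ) = n := by
      simp [Module.finrank_fintype_fun_eq_card]
    rw [hdom] at hrk
    omega
  · -- PSD
    have hone : ρ • (1 : Matrix (Fin n) (Fin n) ℝ)
        = conjAlgHom V h1 h2 (fun _ => ρ) := by
      have : (fun _ : Fin n => ρ) = ρ • (1 : Fin n → ℝ) := by funext i; simp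
      rw [this, _root_.map_smul, _root_.map_one]
    rw [hUΦ, hone, ← _root_.map_sub]
    apply conjAlgHom_posSemidef
    intro i
    have := fpoly_le ω hω N hN (d i) (hd1 i)
    simp only [Pi.sub_apply]
    linarith

end Forward

section Backward

open Matrix

lemma backward_dir {n k N : ℕ} (hk : k ≤ n) (hN : Even N) (hN2 : 2 ≤ N)
    (ω : ℝ) (hω : 0 < ω) (U : Matrix (Fin n) (Fin n) ℝ)
    (hsym : U.IsSymm)
    (hdim : n - k ≤ Module.finrank ℝ
      (Module.End.eigenspace (Matrix.toLin' U) (1 - (1 - ω) ^ N)))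
    (hpsd : ((1 - (1 - ω) ^ N) • (1 : Matrix (Fin n) (Fin n) ℝ) - U).PosSemidef) :
    U ∈ unrollingSet N k n ω := by
  classical
  set ρ : ℝ := 1 - (1 - ω) ^ N with hρ
  have hH : U.IsHermitian := by
    rw [Matrix.IsHermitian, conjTranspose_eq_transpose_of_trivial]
    exact hsym
  set V : Matrix (Fin n) (Fin n) ℝ := (hH.eigenvectorUnitary : Matrix (Fin n) (Fin n) ℝ) with hV
  have h1 : V * Vᴴ = 1 := by
    have := Matrix.mem_unitaryGroup_iff.mp hH.eigenvectorUnitary.2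
    rwa [Matrix.star_eq_conjTranspose] at this
  have h2 : Vᴴ * V = 1 := by
    have := Matrix.mem_unitaryGroup_iff'.mp hH.eigenvectorUnitary.2
    rwa [Matrix.star_eq_conjTranspose] at this
  set μ : Fin n → ℝ := hH.eigenvalues with hμ
  set Φ := conjAlgHom V h1 h2 with hΦ
  have hspecU : U = Φ μ := by
    rw [hΦ, conjAlgHom_apply]
    have := hH.spectral_theorem
    rwa [Unitary.conjStarAlgAut_apply, Matrix.star_eq_conjTranspose, RCLike.ofReal_real_eq_id, Function.id_comp] at this
  have honeρ : Φ (fun _ => ρ) = ρ • (1 : Matrix (Fin n) (Fin n) ℝ) := by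
    have : (fun _ : Fin n => ρ) = ρ • (1 : Fin n → ℝ) := by funext i; simp
    rw [this, _root_.map_smul, _root_.map_one]
  have hμle : ∀ i, μ i ≤ ρ := by
    have hps : (Φ (fun i => ρ - μ i)).PosSemidef := by
      have he : Φ (fun i => ρ - μ i) = ρ • 1 - U := by
        have hsub : (fun i => ρ - μ i) = (fun _ : Fin n => ρ) - μ := by funext i; simp
        rw [hsub, _root_.map_sub, honeρ, ← hspecU]
      rw [he]; exact hpsd
    intro i
    have := conjAlgHom_entry_nonneg V h1 h2 _ hps i
    linarith
  -- choose preimages under fpoly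
  have hchoice : ∀ i, ∃ e : ℝ, 1 ≤ e ∧ fpoly ω N e = μ i := fun i =>
    fpoly_surj ω hω N hN hN2 (μ i) (hμle i)
  set d : Fin n → ℝ := fun i => if μ i = ρ then 1 else (hchoice i).choose with hddef
  have hd1 : ∀ i, 1 ≤ d i := by
    intro i
    rw [hddef]
    by_cases h : μ i = ρ
    · simp [h]
    · simp only [h, if_false]
      exact (hchoice i).choose_spec.1
  have hfd : ∀ i, fpoly ω N (d i) = μ i := by
    intro i
    rw [hddef]
    by_cases h : μ i = ρ
    · simp only [h, if_true]
      rw [fpoly_one, ← hρ]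
    · simp only [h, if_false]
      exact (hchoice i).choose_spec.2
  -- counting: at most k indices with d i ≠ 1
  set E := Module.End.eigenspace (Matrix.toLin' U) ρ with hE
  let L : E →ₗ[ℝ] ({i : Fin n // μ i = ρ} → ℝ) :=
    { toFun := fun x => fun j => (Vᴴ *ᵥ (x : Fin n → ℝ)) j.1,
      map_add' := by intro x y; funext j; simp [Matrix.mulVec_add]
      map_smul' := by intro c x; funext j; simp [Matrix.mulVec_smul] }
  have hLinj : Function.Injective L := by
    rw [← LinearMap.ker_eq_bot, eq_bot_iff]
    intro x hx
    simp only [LinearMap.mem_ker] at hx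
    have hUx : U *ᵥ (x : Fin n → ℝ) = ρ • (x : Fin n → ℝ) := by
      have h' := Module.End.mem_eigenspace_iff.mp x.2
      rwa [Matrix.toLin'_apply] at h'
    have hy : ∀ j : Fin n, (Vᴴ *ᵥ (x : Fin n → ℝ)) j = 0 := by
      intro j
      by_cases h : μ j = ρ
      · exact congrFun hx ⟨j, h⟩
      · -- use eigen equation
        have hVU : Vᴴ * U = diagonal μ * Vᴴ := by
          rw [hspecU, hΦ, conjAlgHom_apply]
          simp only [← mul_assoc]
          rw [h2, one_mul]
        have hcoord : diagonal μ *ᵥ (Vᴴ *ᵥ (x : Fin n → ℝ))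
            = ρ • (Vᴴ *ᵥ (x : Fin n → ℝ)) := by
          rw [Matrix.mulVec_mulVec, ← hVU, ← Matrix.mulVec_mulVec, hUx, Matrix.mulVec_smul]
        have := congrFun hcoord j
        rw [Matrix.mulVec_diagonal] at this
        simp only [Pi.smul_apply, smul_eq_mul] at this
        have hne : μ j - ρ ≠ 0 := sub_ne_zero_of_ne h
        have : (μ j - ρ) * (Vᴴ *ᵥ (x : Fin n → ℝ)) j = 0 := by linarith
        exact (mul_eq_zero.mp this).resolve_left hne
    have hzero : Vᴴ *ᵥ (x : Fin n → ℝ) = 0 := funext hy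
    have hxval : (x : Fin n → ℝ) = 0 := by
      have : V *ᵥ (Vᴴ *ᵥ (x : Fin n → ℝ)) = (x : Fin n → ℝ) := by
        rw [Matrix.mulVec_mulVec, h1, Matrix.one_mulVec]
      rw [hzero, Matrix.mulVec_zero] at this
      exact this.symm
    exact Submodule.coe_eq_zero.mp hxval
  have hEcard : Module.finrank ℝ E ≤ Fintype.card {i : Fin n // μ i = ρ} := by
    have := LinearMap.finrank_le_finrank_of_injective hLinj
    rwa [Module.finrank_fintype_fun_eq_card] at this
  have hcec : Fintype.card {i : Fin n // ¬ (μ i = ρ)}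
      = Fintype.card (Fin n) - Fintype.card {i : Fin n // μ i = ρ} :=
    Fintype.card_subtype_compl _
  have hcle : Fintype.card {i : Fin n // μ i = ρ} ≤ n := by
    have := Fintype.card_subtype_le (fun i : Fin n => μ i = ρ)
    simpa using this
  have hkcount : Fintype.card {i : Fin n // d i ≠ 1} ≤ k := by
    have hmono : Fintype.card {i : Fin n // d i ≠ 1}
        ≤ Fintype.card {i : Fin n // ¬ (μ i = ρ)} := by
      apply Fintype.card_subtype_mono
      intro i hi h
      apply hi
      rw [hddef]; simp [h]
    simp only [Fintype.card_fin] at hcec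
    omega
  obtain ⟨g⟩ : Nonempty ({i : Fin n // d i ≠ 1} ↪ Fin k) :=
    Function.Embedding.nonempty_of_card_le (by simpa using hkcount)
  -- build R
  set Emat : Matrix (Fin k) (Fin n) ℝ :=
    Matrix.of (fun a i => if h : d i = 1 then 0 else if g ⟨i, h⟩ = a then 1 else 0) with hEmat
  set Dsq : Matrix (Fin n) (Fin n) ℝ := diagonal (fun i => Real.sqrt (d i - 1)) with hDsq
  set R : Matrix (Fin k) (Fin n) ℝ := Emat * (Dsq * Vᴴ) with hR
  have hEE : Ematᵀ * Emat = diagonal (fun i => if d i = 1 then (0:ℝ) else 1) := by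
    ext i j
    rw [Matrix.mul_apply]
    simp only [Matrix.transpose_apply, hEmat, Matrix.of_apply]
    by_cases hi : d i = 1
    · rw [Finset.sum_eq_zero (fun a _ => by rw [dif_pos hi, zero_mul])]
      by_cases hij : i = j
      · subst hij
        rw [Matrix.diagonal_apply_eq, if_pos hi]
      · rw [Matrix.diagonal_apply_ne _ hij]
    · by_cases hj : d j = 1
      · rw [Finset.sum_eq_zero (fun a _ => by rw [dif_pos hj, mul_zero])]
        have hij : i ≠ j := fun h => hi (h ▸ hj)
        rw [Matrix.diagonal_apply_ne _ hij]
      · by_cases hij : i = j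
        · subst hij
          rw [Matrix.diagonal_apply_eq, if_neg hi]
          have hterm : ∀ a : Fin k,
              (if h : d i = 1 then (0:ℝ) else if g ⟨i, h⟩ = a then 1 else 0) *
                (if h : d i = 1 then (0:ℝ) else if g ⟨i, h⟩ = a then 1 else 0)
              = if g ⟨i, hi⟩ = a then 1 else 0 := by
            intro a
            rw [dif_neg hi]
            split_ifs with hc
            · rw [one_mul]
            · rw [mul_zero]
          rw [Finset.sum_congr rfl fun a _ => hterm a,
            Finset.sum_ite_eq Finset.univ (g ⟨i, hi⟩) (fun _ => (1:ℝ))]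
          simp
        · have hgg : g ⟨i, hi⟩ ≠ g ⟨j, hj⟩ := by
            intro h
            exact hij (congrArg Subtype.val (g.injective h))
          rw [Matrix.diagonal_apply_ne _ hij]
          apply Finset.sum_eq_zero
          intro a _
          rw [dif_neg hi, dif_neg hj]
          split_ifs with hA hB
          · exact absurd (hA.trans hB.symm) hgg
          all_goals simp
  have hRTR : Rᵀ * R = Φ (fun i => d i - 1) := by
    have hVt : (Vᴴ)ᵀ = V := by
      rw [conjTranspose_eq_transpose_of_trivial, transpose_transpose]
    rw [hR, hDsq, Matrix.transpose_mul, Matrix.transpose_mul, Matrix.diagonal_transpose,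
      hVt, hΦ, conjAlgHom_apply]
    have key : diagonal (fun i => Real.sqrt (d i - 1)) * (Ematᵀ * Emat) *
        diagonal (fun i => Real.sqrt (d i - 1)) = diagonal (fun i => d i - 1) := by
      rw [hEE, diagonal_mul_diagonal, diagonal_mul_diagonal]
      refine congrArg Matrix.diagonal ?_
      funext i
      by_cases h : d i = 1
      · simp [h]
      · simp [h, Real.mul_self_sqrt (show (0:ℝ) ≤ d i - 1 by linarith [hd1 i])]
    calc V * diagonal (fun i => Real.sqrt (d i - 1)) * Ematᵀ *
          (Emat * (diagonal (fun i => Real.sqrt (d i - 1)) * Vᴴ))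
        = V * (diagonal (fun i => Real.sqrt (d i - 1)) * (Ematᵀ * Emat) *
            diagonal (fun i => Real.sqrt (d i - 1))) * Vᴴ := by
          simp only [Matrix.mul_assoc]
      _ = V * diagonal (fun i => d i - 1) * Vᴴ := by rw [key]
  have hARTR : 1 + Rᵀ * R = Φ d := by
    have hsum : (1 : Fin n → ℝ) + (fun i => d i - 1) = d := by funext i; simp
    rw [hRTR, ← _root_.map_one Φ, ← _root_.map_add, hsum]
  have hRt : Rᵀ = Rᴴ := (conjTranspose_eq_transpose_of_trivial R).symm
  have hpsdR : (Rᵀ * R).PosSemidef := by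
    rw [hRt]; exact posSemidef_conjTranspose_mul_self R
  have hPD : (1 + Rᵀ * R).PosDef := Matrix.PosDef.one.add_posSemidef hpsdR
  have hdet : IsUnit (1 + Rᵀ * R).det := isUnit_iff_ne_zero.mpr hPD.det_pos.ne'
  refine ⟨R, ?_⟩
  rw [inv_geom_formula (1 + Rᵀ * R) hdet ω N, hARTR, conjAlgHom_geom, hspecU]
  congr 1
  funext i
  exact (hfd i).symm

end Backward

/-- Expressivity of unrolling, even case: for even `N ≥ 2` and `ω > 0`,
`U ∈ B_{N,k,ω}` iff `U` is symmetric, the eigenspace of `U` for the eigenvalue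
`ρ_{N,ω} = 1 − (1 − ω)^N` has dimension at least `n − k`, and
`ρ_{N,ω}·I − U` is positive semidefinite. -/
theorem expressivity_unrolling_even (n k N : ℕ) (hn : 1 ≤ n) (hk : k ≤ n)
    (hN : Even N) (hN2 : 2 ≤ N) (ω : ℝ) (hω : 0 < ω)
    (U : Matrix (Fin n) (Fin n) ℝ) :
    U ∈ unrollingSet N k n ω ↔
      U.IsSymm ∧
      n - k ≤ Module.finrank ℝ
        (Module.End.eigenspace (Matrix.toLin' U) (1 - (1 - ω) ^ N)) ∧
      ((1 - (1 - ω) ^ N) • (1 : Matrix (Fin n) (Fin n) ℝ) - U).PosSemidef := by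
  constructor
  · intro h
    exact forward_dir hk hN ω hω U h
  · rintro ⟨hs, hd, hp⟩
    exact backward_dir hk hN hN2 ω hω U hs hd hp
end

section
/- Let N be an odd natural number with N ≥ 1. Then for every real number r it holds that ∑_{j=0}^{N−1} r^j ≥ 1/2 + 1/(N+1). -/
/-!
Writing `S m = ∑_{j < 2m+1} r^j`, we have `S (m+1) = 1 + r + r² S m`. If `S m ≥ b > 0` then
`S (m+1) ≥ 1 + r + b r² ≥ 1 - 1/(4b)`, the minimum of the quadratic. The bounds
`b_m = 1/2 + 1/(2m+2)` satisfy exactly `b_{m+1} = 1 - 1/(4 b_m)`, so the induction closes.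
-/

open Finset

lemma geom_sum_range_add_two {R : Type*} [CommSemiring R] (r : R) (n : ℕ) :
    ∑ j ∈ range (n + 2), r ^ j = 1 + r + r ^ 2 * ∑ j ∈ range n, r ^ j := by
  rw [geom_sum_succ, geom_sum_succ]
  ring

section OrderedField

variable {K : Type*} [Field K] [LinearOrder K] [IsStrictOrderedRing K]

lemma one_sub_inv_four_mul_le_one_add_add_mul_sq {b : K} (hb : 0 < b) (r : K) :
    1 - (4 * b)⁻¹ ≤ 1 + r + b * r ^ 2 := by
  have hsq : 1 + r + b * r ^ 2 - (1 - (4 * b)⁻¹) = (2 * b * r + 1) ^ 2 / (4 * b) := by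
    field_simp
    ring
  have : 0 ≤ (2 * b * r + 1) ^ 2 / (4 * b) := by positivity
  linarith

lemma geom_sum_range_two_mul_add_one_ge (r : K) (m : ℕ) :
    1 / 2 + 1 / (2 * m + 2 : K) ≤ ∑ j ∈ range (2 * m + 1), r ^ j := by
  induction m with
  | zero => norm_num
  | succ m ih =>
    set b : K := 1 / 2 + 1 / (2 * m + 2)
    have hb : 0 < b := by positivity
    have hnext : 1 / 2 + 1 / (2 * ((m + 1 : ℕ) : K) + 2) = 1 - (4 * b)⁻¹ := by
      push_cast [b]
      field_simp
      ring
    rw [hnext, show 2 * (m + 1) + 1 = 2 * m + 1 + 2 by ring, geom_sum_range_add_two]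
    calc 1 - (4 * b)⁻¹
        ≤ 1 + r + b * r ^ 2 := one_sub_inv_four_mul_le_one_add_add_mul_sq hb r
      _ ≤ 1 + r + r ^ 2 * ∑ j ∈ range (2 * m + 1), r ^ j := by
        rw [mul_comm]
        gcongr

end OrderedField

theorem geom_sum_lower_bound_general (N : ℕ) (hN : Odd N) (r : ℝ) :
    1 / 2 + 1 / ((N : ℝ) + 1) ≤ ∑ j ∈ Finset.range N, r ^ j := by
  obtain ⟨m, rfl⟩ := hN
  rw [show ((2 * m + 1 : ℕ) : ℝ) + 1 = 2 * m + 2 by push_cast; ring]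
  exact geom_sum_range_two_mul_add_one_ge r m

/-- For odd `N ≥ 1` and every real `r`,
`∑_{j=0}^{N−1} r^j ≥ 1/2 + 1/(N+1)`. -/
theorem geom_sum_lower_bound (N : ℕ) (hN : Odd N) (hN1 : 1 ≤ N) (r : ℝ) :
    1 / 2 + 1 / ((N : ℝ) + 1) ≤ ∑ j ∈ Finset.range N, r ^ j :=
  geom_sum_lower_bound_general N hN r
end

section
/- Let n ≥ 1, μ, θ ∈ ℝ and σ > 0. Then the matrix T* = ((μ² + θ²)/(n(μ² + θ²) + σ²))·𝟙𝟙ᵀ is the unique minimizer of E_const over all T ∈ ℝ^{n×n}, and the minimal value is E_const(T*) = (σ²/2)·n(μ² + θ²)/(n(μ² + θ²) + σ²). -/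
open Matrix

/-- The risk for the random constant vectors model:
`E_const(T) = ((μ² + θ²)/2)‖(T − I)𝟙‖₂² + (σ²/2)‖T‖_F²`. -/
noncomputable def Econst (n : ℕ) (μ θ σ : ℝ) (T : Matrix (Fin n) (Fin n) ℝ) : ℝ :=
  (μ ^ 2 + θ ^ 2) / 2 * (∑ i, ((T - 1).mulVec (fun _ : Fin n => 1) i) ^ 2)
    + σ ^ 2 / 2 * ∑ i, ∑ j, (T i j) ^ 2

/-- Best linear estimator, random constant vectors:
`T* = ((μ²+θ²)/(n(μ²+θ²)+σ²))·𝟙𝟙ᵀ` is the unique minimizer of `E_const`, and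
`E_const(T*) = (σ²/2)·n(μ²+θ²)/(n(μ²+θ²)+σ²)`. -/
theorem best_linear_estimator_const (n : ℕ) (hn : 1 ≤ n) (μ θ σ : ℝ) (hσ : 0 < σ) :
    (∀ T : Matrix (Fin n) (Fin n) ℝ,
        T ≠ ((μ ^ 2 + θ ^ 2) / ((n : ℝ) * (μ ^ 2 + θ ^ 2) + σ ^ 2)) •
            Matrix.of (fun _ _ : Fin n => (1 : ℝ)) →
        Econst n μ θ σ
            (((μ ^ 2 + θ ^ 2) / ((n : ℝ) * (μ ^ 2 + θ ^ 2) + σ ^ 2)) •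
              Matrix.of (fun _ _ : Fin n => (1 : ℝ)))
          < Econst n μ θ σ T) ∧
    Econst n μ θ σ
        (((μ ^ 2 + θ ^ 2) / ((n : ℝ) * (μ ^ 2 + θ ^ 2) + σ ^ 2)) •
          Matrix.of (fun _ _ : Fin n => (1 : ℝ)))
      = σ ^ 2 / 2 *
          ((n : ℝ) * (μ ^ 2 + θ ^ 2) / ((n : ℝ) * (μ ^ 2 + θ ^ 2) + σ ^ 2)) := by
  set a : ℝ := μ ^ 2 + θ ^ 2 with ha
  set b : ℝ := σ ^ 2 with hbdef
  have hb : 0 < b := by positivity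
  have ha0 : 0 ≤ a := by positivity
  set D : ℝ := (n : ℝ) * a + b with hDdef
  have hD : 0 < D := by positivity
  set c : ℝ := a / D with hc
  -- mulVec simplification
  have hmv : ∀ (T : Matrix (Fin n) (Fin n) ℝ) (i : Fin n),
      (T - 1).mulVec (fun _ : Fin n => 1) i = (∑ j, T i j) - 1 := by
    intro T i
    simp [mulVec, dotProduct, Matrix.sub_apply, Matrix.one_apply,
      Finset.sum_sub_distrib]
  -- row identity
  have row : ∀ t : Fin n → ℝ,
      a / 2 * ((∑ j, t j) - 1) ^ 2 + b / 2 * ∑ j, (t j) ^ 2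
        = a * b / (2 * D) + a / 2 * ((∑ j, t j) - (n : ℝ) * c) ^ 2
          + b / 2 * ∑ j, (t j - c) ^ 2 := by
    intro t
    have h1 : ∑ j, (t j - c) ^ 2
        = ∑ j, (t j) ^ 2 - 2 * c * ∑ j, t j + (n : ℝ) * c ^ 2 := by
      have : ∀ j, (t j - c) ^ 2 = (t j) ^ 2 - 2 * c * t j + c ^ 2 := by
        intro j; ring
      simp only [this, Finset.sum_add_distrib, Finset.sum_sub_distrib,
        Finset.sum_const, Finset.card_fin, nsmul_eq_mul, Finset.mul_sum]
    rw [h1, hc]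
    field_simp
    ring
  -- key identity
  have key : ∀ T : Matrix (Fin n) (Fin n) ℝ,
      Econst n μ θ σ T
        = (n : ℝ) * (a * b / (2 * D))
          + a / 2 * ∑ i, ((∑ j, T i j) - (n : ℝ) * c) ^ 2
          + b / 2 * ∑ i, ∑ j, (T i j - c) ^ 2 := by
    intro T
    have : Econst n μ θ σ T
        = ∑ i, (a / 2 * ((∑ j, T i j) - 1) ^ 2 + b / 2 * ∑ j, (T i j) ^ 2) := by
      unfold Econst
      simp only [hmv, Finset.sum_add_distrib, ← Finset.mul_sum, ha, hbdef]
    rw [this]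
    simp only [row]
    simp [Finset.sum_add_distrib, Finset.mul_sum, Finset.card_fin]
  set Tstar : Matrix (Fin n) (Fin n) ℝ := c • Matrix.of (fun _ _ : Fin n => (1 : ℝ))
    with hT
  have hTval : ∀ i j, Tstar i j = c := by
    intro i j; simp [hT]
  have hstar : Econst n μ θ σ Tstar = (n : ℝ) * (a * b / (2 * D)) := by
    rw [key]
    simp [hTval, Finset.sum_const, Finset.card_fin]
  have hmin : Econst n μ θ σ Tstar
      = b / 2 * ((n : ℝ) * a / D) := by
    rw [hstar]; field_simp
  constructor
  · intro T hTne
    rw [key T, hmin]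
    have h1 : 0 ≤ ∑ i, ((∑ j, T i j) - (n : ℝ) * c) ^ 2 :=
      Finset.sum_nonneg fun i _ => sq_nonneg _
    have h2 : 0 < ∑ i, ∑ j, (T i j - c) ^ 2 := by
      obtain ⟨i, j, hij⟩ : ∃ i j, T i j ≠ c := by
        by_contra h
        push_neg at h
        exact hTne (by ext i j; simp [h i j, hT])
      have hpos : 0 < ∑ j', (T i j' - c) ^ 2 := by
        apply Finset.sum_pos' (fun j' _ => sq_nonneg _)
        exact ⟨j, Finset.mem_univ j, sq_pos_of_ne_zero (sub_ne_zero.mpr hij)⟩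
      apply Finset.sum_pos' (fun i' _ => Finset.sum_nonneg fun j' _ => sq_nonneg _)
      exact ⟨i, Finset.mem_univ i, hpos⟩
    have hval : (n : ℝ) * (a * b / (2 * D)) = b / 2 * ((n : ℝ) * a / D) := by
      field_simp
    rw [hval] at *
    nlinarith [mul_pos (by positivity : (0:ℝ) < b / 2) h2,
      mul_nonneg (by positivity : (0:ℝ) ≤ a / 2) h1]
  · exact hmin
end

section
/- Let n ≥ 2, let k be a natural number with 1 ≤ k < n, let μ, θ ∈ ℝ and σ > 0. Then inf_{T ∈ A_k} E_const(T) = (σ²/2)·(n − k), and this infimum is not attained: for every T ∈ A_k one has E_const(T) > (σ²/2)·(n − k). -/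
open Matrix

open Finset

/-- The risk for the random constant vectors model:
`E_const(T) = ((μ² + θ²)/2)‖(T − I)𝟙‖₂² + (σ²/2)‖T‖_F²`. -/

noncomputable def gv (m a : ℕ) : ℝ :=
  if a ≤ m then 1 else if a = m + 1 then -((m:ℝ)+1) else 0

lemma gv_eval_le {m a : ℕ} (h : a ≤ m) : gv m a = 1 := if_pos h

lemma gv_eval_succ (m : ℕ) : gv m (m+1) = -((m:ℝ)+1) := by
  unfold gv; rw [if_neg (by omega), if_pos rfl]

lemma gv_eval_big {m a : ℕ} (h : m + 2 ≤ a) : gv m a = 0 := by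
  unfold gv; rw [if_neg (by omega), if_neg (by omega)]

lemma gv_sum_mul {m n : ℕ} (h : m + 2 ≤ n) (f : ℕ → ℝ) :
    ∑ a ∈ Finset.range n, gv m a * f a
      = (∑ a ∈ Finset.range (m+1), f a) - ((m:ℝ)+1) * f (m+1) := by
  have hsub : Finset.range (m+2) ⊆ Finset.range n := Finset.range_subset_range.2 h
  rw [← Finset.sum_subset hsub (fun a ha hna => by
    rw [gv_eval_big (by simpa using hna), zero_mul])]
  rw [Finset.sum_range_succ, gv_eval_succ]
  have h1 : ∑ a ∈ Finset.range (m+1), gv m a * f a = ∑ a ∈ Finset.range (m+1), f a :=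
    Finset.sum_congr rfl (fun a ha => by
      rw [gv_eval_le (Nat.lt_succ_iff.mp (Finset.mem_range.mp ha)), one_mul])
  rw [h1]; ring

lemma gv_sum_zero {m n : ℕ} (h : m + 2 ≤ n) : ∑ a ∈ Finset.range n, gv m a = 0 := by
  have := gv_sum_mul h (fun _ => (1:ℝ))
  simp only [mul_one] at this
  rw [this, Finset.sum_const, Finset.card_range]; push_cast; ring

lemma gv_sum_sq {m n : ℕ} (h : m + 2 ≤ n) :
    ∑ a ∈ Finset.range n, gv m a * gv m a = ((m:ℝ)+1) * ((m:ℝ)+2) := by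
  rw [gv_sum_mul h (gv m), gv_eval_succ]
  have h1 : ∑ a ∈ Finset.range (m+1), gv m a = ∑ a ∈ Finset.range (m+1), (1:ℝ) :=
    Finset.sum_congr rfl (fun a ha => gv_eval_le (Nat.lt_succ_iff.mp (Finset.mem_range.mp ha)))
  rw [h1, Finset.sum_const, Finset.card_range]; push_cast; ring

lemma gv_sum_orth {m m' n : ℕ} (hmm : m < m') (h : m + 2 ≤ n) :
    ∑ a ∈ Finset.range n, gv m a * gv m' a = 0 := by
  rw [gv_sum_mul h (gv m')]
  have h1 : ∑ a ∈ Finset.range (m+1), gv m' a = ∑ a ∈ Finset.range (m+1), (1:ℝ) :=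
    Finset.sum_congr rfl (fun a ha => gv_eval_le
      (le_trans (Nat.lt_succ_iff.mp (Finset.mem_range.mp ha)) hmm.le))
  rw [h1, gv_eval_le hmm, Finset.sum_const, Finset.card_range]; push_cast; ring

noncomputable def nuMat (k n : ℕ) : Matrix (Fin k) (Fin n) ℝ :=
  Matrix.of fun i a => gv i.val a.val / Real.sqrt (((i.val:ℝ)+1) * ((i.val:ℝ)+2))

lemma sqrt_pos_nu (m : ℕ) : 0 < Real.sqrt (((m:ℝ)+1) * ((m:ℝ)+2)) :=
  Real.sqrt_pos.2 (by positivity)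

lemma nuMat_mul_transpose {k n : ℕ} (hk : k < n) :
    nuMat k n * (nuMat k n)ᵀ = 1 := by
  ext i j
  have hi2 : i.val + 2 ≤ n := by omega
  have hj2 : j.val + 2 ≤ n := by omega
  set si := Real.sqrt (((i.val:ℝ)+1) * ((i.val:ℝ)+2)) with hsi
  set sj := Real.sqrt (((j.val:ℝ)+1) * ((j.val:ℝ)+2)) with hsj
  have hsip := sqrt_pos_nu i.val
  have hsjp := sqrt_pos_nu j.val
  have hrw : ∀ a : Fin n, nuMat k n i a * (nuMat k n)ᵀ a j
      = gv i.val a.val * gv j.val a.val * (si * sj)⁻¹ := by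
    intro a
    simp only [nuMat, Matrix.transpose_apply, Matrix.of_apply, ← hsi, ← hsj]
    rw [div_mul_div_comm, div_eq_mul_inv]
  rw [Matrix.mul_apply, Finset.sum_congr rfl (fun a _ => hrw a), ← Finset.sum_mul]
  have hfin : ∑ a : Fin n, gv i.val a.val * gv j.val a.val
      = ∑ a ∈ Finset.range n, gv i.val a * gv j.val a :=
    Fin.sum_univ_eq_sum_range (fun a => gv i.val a * gv j.val a) n
  rcases lt_trichotomy i j with hij | hij | hij
  · have : (i:ℕ) < (j:ℕ) := hij
    rw [hfin, gv_sum_orth this hi2, zero_mul, Matrix.one_apply_ne hij.ne]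
  · subst hij
    rw [hfin, gv_sum_sq hi2, Matrix.one_apply_eq]
    have hss : si * sj = ((i.val:ℝ)+1) * ((i.val:ℝ)+2) := by
      rw [hsi, hsj]; exact Real.mul_self_sqrt (by positivity)
    rw [hss, mul_inv_cancel₀ (by positivity)]
  · have : (j:ℕ) < (i:ℕ) := hij
    have hsym : ∑ a ∈ Finset.range n, gv i.val a * gv j.val a
        = ∑ a ∈ Finset.range n, gv j.val a * gv i.val a :=
      Finset.sum_congr rfl (fun a _ => mul_comm _ _)
    rw [hfin, hsym, gv_sum_orth this hj2, zero_mul, Matrix.one_apply_ne hij.ne']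

lemma nuMat_mulVec_one {k n : ℕ} (hk : k < n) :
    nuMat k n *ᵥ (fun _ : Fin n => (1:ℝ)) = 0 := by
  ext i
  have hi2 : i.val + 2 ≤ n := by omega
  simp only [Matrix.mulVec, dotProduct, nuMat, Matrix.of_apply, mul_one, Pi.zero_apply]
  have hfin : ∑ a : Fin n, gv i.val a.val / Real.sqrt (((i.val:ℝ)+1) * ((i.val:ℝ)+2))
      = (∑ a ∈ Finset.range n, gv i.val a) / Real.sqrt (((i.val:ℝ)+1) * ((i.val:ℝ)+2)) := by
    rw [← Finset.sum_div]
    congr 1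
    exact Fin.sum_univ_eq_sum_range (fun a => gv i.val a) n
  rw [hfin, gv_sum_zero hi2, zero_div]

lemma econst_value {k n : ℕ} (hk : k < n) (μ θ σ t : ℝ) :
    Econst n μ θ σ ((1 + (t • nuMat k n)ᵀ * (t • nuMat k n))⁻¹)
      = σ^2/2 * (((n:ℝ) - k) + k * ((1+t^2)⁻¹)^2) := by
  set N := nuMat k n with hN
  set P : Matrix (Fin n) (Fin n) ℝ := Nᵀ * N with hP
  have hNNT : N * Nᵀ = 1 := nuMat_mul_transpose hk
  have hPP : P * P = P := by
    rw [hP, Matrix.mul_assoc Nᵀ N (Nᵀ * N), ← Matrix.mul_assoc N Nᵀ N, hNNT, Matrix.one_mul]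
  have hPsym : Pᵀ = P := by rw [hP, Matrix.transpose_mul, Matrix.transpose_transpose]
  have hPs : ∀ a b, P a b = P b a := fun a b => by
    conv_lhs => rw [← hPsym, Matrix.transpose_apply]
  have htrP : P.trace = (k:ℝ) := by
    rw [hP, Matrix.trace_mul_comm, hNNT, Matrix.trace_one]; simp
  have hPone : P *ᵥ (fun _ : Fin n => (1:ℝ)) = 0 := by
    rw [hP, ← Matrix.mulVec_mulVec, nuMat_mulVec_one hk, Matrix.mulVec_zero]
  have h1t : (0:ℝ) < 1 + t^2 := by positivity
  set c : ℝ := t^2/(1+t^2) with hc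
  have hS : (t • N)ᵀ * (t • N) = (t^2) • P := by
    rw [Matrix.transpose_smul, Matrix.smul_mul, Matrix.mul_smul, smul_smul, hP, sq]
  set T : Matrix (Fin n) (Fin n) ℝ := 1 - c • P with hT
  have hexp : (1 + (t^2) • P) * T = 1 + ((t^2) • P - (c • P + (t^2 * c) • P)) := by
    rw [hT, Matrix.mul_sub, Matrix.mul_one, Matrix.add_mul, Matrix.one_mul,
      Matrix.smul_mul, Matrix.mul_smul, smul_smul, hPP]
    abel
  have hcoef : (t^2) • P - (c • P + (t^2 * c) • P) = (0 : Matrix (Fin n) (Fin n) ℝ) := by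
    rw [← add_smul, ← sub_smul]
    have : t^2 - (c + t^2*c) = 0 := by have hc2 : c * (1+t^2) = t^2 := (by rw [hc]; exact div_mul_cancel₀ _ h1t.ne'); linear_combination -hc2
    rw [this, zero_smul]
  have hright : (1 + (t^2) • P) * T = 1 := by rw [hexp, hcoef, add_zero]
  have hTinv : (1 + (t • N)ᵀ * (t • N))⁻¹ = T := by
    rw [hS]; exact Matrix.inv_eq_right_inv hright
  have hTm1 : (T - 1) *ᵥ (fun _ : Fin n => (1:ℝ)) = 0 := by
    have h0 : T - 1 = -(c • P) := by rw [hT]; abel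
    rw [h0, Matrix.neg_mulVec, Matrix.smul_mulVec, hPone, smul_zero, neg_zero]
  have hfirst : ∑ i : Fin n, (((T - 1) *ᵥ (fun _ : Fin n => (1:ℝ))) i)^2 = 0 := by
    rw [hTm1]; simp
  have hA1 : ∑ i : Fin n, ∑ j : Fin n, ((1:Matrix (Fin n) (Fin n) ℝ) i j)^2 = (n:ℝ) := by
    simp [Matrix.one_apply, ite_pow, Finset.sum_ite_eq]
  have hB1 : ∑ i : Fin n, ∑ j : Fin n, (1:Matrix (Fin n) (Fin n) ℝ) i j * P i j = (k:ℝ) := by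
    have h3 : ∀ i : Fin n, ∑ j : Fin n, (1:Matrix (Fin n) (Fin n) ℝ) i j * P i j = P i i := by
      intro i; simp [Matrix.one_apply, ite_mul, Finset.sum_ite_eq]
    rw [Finset.sum_congr rfl (fun i _ => h3 i)]
    simpa [Matrix.trace, Matrix.diag] using htrP
  have hC1 : ∑ i : Fin n, ∑ j : Fin n, (P i j)^2 = (k:ℝ) := by
    have h2 : ∑ i : Fin n, ∑ j : Fin n, (P i j)^2 = (P*P).trace := by
      simp only [Matrix.trace, Matrix.diag, Matrix.mul_apply]
      refine Finset.sum_congr rfl fun i _ => Finset.sum_congr rfl fun j _ => ?_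
      rw [sq]
      congr 1
      exact hPs i j
    rw [h2, hPP, htrP]
  have hexp2 : ∀ i j : Fin n, (T i j)^2
      = ((1:Matrix (Fin n) (Fin n) ℝ) i j)^2
        - (2*c) * ((1:Matrix (Fin n) (Fin n) ℝ) i j * P i j) + c^2 * (P i j)^2 := by
    intro i j
    simp only [hT, Matrix.sub_apply, Matrix.smul_apply, smul_eq_mul]
    ring
  have hsecond : ∑ i : Fin n, ∑ j : Fin n, (T i j)^2 = (n:ℝ) - 2*c*k + c^2 * k := by
    rw [Finset.sum_congr rfl (fun i _ => Finset.sum_congr rfl (fun j _ => hexp2 i j))]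
    simp only [Finset.sum_add_distrib, Finset.sum_sub_distrib, ← Finset.mul_sum]
    rw [hA1, hB1, hC1]
  have h1c : 1 - c = (1+t^2)⁻¹ := by rw [hc]; field_simp; ring
  rw [hTinv]
  unfold Econst
  rw [hfirst, hsecond, mul_zero, zero_add]
  rw [← h1c]
  congr 1
  ring

lemma frob_lower (n k : ℕ) (hk1 : 1 ≤ k) (R : Matrix (Fin k) (Fin n) ℝ) :
    (n:ℝ) - k < ∑ i : Fin n, ∑ j : Fin n, (((1 + Rᵀ * R)⁻¹ : Matrix (Fin n) (Fin n) ℝ) i j)^2 := by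
  classical
  set S : Matrix (Fin n) (Fin n) ℝ := Rᵀ * R with hSdef
  have hPSD : S.PosSemidef := by
    simpa [hSdef, Matrix.conjTranspose_eq_transpose_of_trivial] using
      Matrix.posSemidef_conjTranspose_mul_self R
  have hS : S.IsHermitian := hPSD.1
  set U : Matrix (Fin n) (Fin n) ℝ := (hS.eigenvectorUnitary : Matrix (Fin n) (Fin n) ℝ) with hUdef
  set d : Fin n → ℝ := hS.eigenvalues with hddef
  have hd : ∀ i, 0 ≤ d i := fun i => hPSD.eigenvalues_nonneg i
  have hd1 : ∀ i, (0:ℝ) < 1 + d i := fun i => by linarith [hd i]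
  have hUU : U * star U = 1 := (Matrix.mem_unitaryGroup_iff).mp hS.eigenvectorUnitary.2
  have hU'U : star U * U = 1 := (Matrix.mem_unitaryGroup_iff').mp hS.eigenvectorUnitary.2
  have hspec : S = U * diagonal d * star U := by
    have := hS.spectral_theorem
    simpa using this
  have hA : 1 + S = U * diagonal (fun i => 1 + d i) * star U := by
    have h1 : (1 : Matrix (Fin n) (Fin n) ℝ) = U * 1 * star U := by
      rw [mul_one, hUU]
    have : diagonal (fun i => 1 + d i) = 1 + diagonal d := by
      rw [← Matrix.diagonal_one, Matrix.diagonal_add]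
    rw [this, Matrix.mul_add, Matrix.add_mul, ← hspec, ← h1]
  set T : Matrix (Fin n) (Fin n) ℝ := U * diagonal (fun i => (1 + d i)⁻¹) * star U with hTdef
  have hmulT : (1 + S) * T = 1 := by
    rw [hA, hTdef]
    calc (U * diagonal (fun i => 1 + d i) * star U) * (U * diagonal (fun i => (1+d i)⁻¹) * star U)
        = U * diagonal (fun i => 1 + d i) * (star U * U) * diagonal (fun i => (1+d i)⁻¹) * star U := by
          noncomm_ring
      _ = U * (diagonal (fun i => 1 + d i) * diagonal (fun i => (1+d i)⁻¹)) * star U := by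
          rw [hU'U, mul_one]; noncomm_ring
      _ = 1 := by
          rw [Matrix.diagonal_mul_diagonal]
          have : (fun i => (1 + d i) * (1 + d i)⁻¹) = fun _ : Fin n => (1:ℝ) := by
            funext i; exact mul_inv_cancel₀ (hd1 i).ne'
          rw [this, Matrix.diagonal_one, mul_one, hUU]
  have hTinv : (1 + S)⁻¹ = T := Matrix.inv_eq_right_inv hmulT
  have hstarU : star U = Uᵀ := Matrix.conjTranspose_eq_transpose_of_trivial U
  have hTsymm : Tᵀ = T := by
    rw [hTdef, hstarU]
    rw [Matrix.transpose_mul, Matrix.transpose_mul, Matrix.transpose_transpose,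
      Matrix.diagonal_transpose]
    noncomm_ring
  have hTT : T * T = U * diagonal (fun i => ((1 + d i)⁻¹)*((1+d i)⁻¹)) * star U := by
    rw [hTdef, ← Matrix.diagonal_mul_diagonal]
    calc (U * diagonal (fun i => (1+d i)⁻¹) * star U) * (U * diagonal (fun i => (1+d i)⁻¹) * star U)
        = U * diagonal (fun i => (1+d i)⁻¹) * (star U * U) * diagonal (fun i => (1+d i)⁻¹) * star U := by
          noncomm_ring
      _ = _ := by rw [hU'U, mul_one]; noncomm_ring
  have htr : ∑ i, ∑ j, (T i j)^2 = ∑ i, ((1 + d i)⁻¹)^2 := by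
    have h1 : ∑ i, ∑ j, (T i j)^2 = (T * Tᵀ).trace := by
      simp [Matrix.trace, Matrix.mul_apply, Matrix.transpose_apply, Matrix.diag, sq]
    rw [h1, hTsymm, hTT, Matrix.trace_mul_comm, ← Matrix.mul_assoc, hU'U, Matrix.one_mul,
      Matrix.trace_diagonal]
    simp [sq]
  rw [hTinv, htr]
  have hrank : (Finset.univ.filter (fun i => d i ≠ 0)).card ≤ k := by
    have h1 : S.rank = Fintype.card {i // d i ≠ 0} := hS.rank_eq_card_non_zero_eigs
    have h2 : S.rank ≤ k := le_trans (Matrix.rank_mul_le_right _ _)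
      (le_trans (Matrix.rank_le_card_height R) (by simp))
    rw [Fintype.card_subtype] at h1
    omega
  have hsplit : ∑ i : Fin n, ((1+d i)⁻¹)^2
      = ∑ i ∈ Finset.univ.filter (fun i => d i ≠ 0), ((1+d i)⁻¹)^2
        + ∑ i ∈ Finset.univ.filter (fun i => ¬ d i ≠ 0), ((1+d i)⁻¹)^2 :=
    (Finset.sum_filter_add_sum_filter_not _ _ _).symm
  have hz0 : ∑ i ∈ Finset.univ.filter (fun i => ¬ d i ≠ 0), ((1+d i)⁻¹)^2
      = ((Finset.univ.filter (fun i => ¬ d i ≠ 0)).card : ℝ) := by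
    rw [Finset.sum_congr rfl (fun i hi => ?_), Finset.sum_const, nsmul_eq_mul, mul_one]
    have : d i = 0 := by simpa using hi
    rw [this]; norm_num
  have hcard : (Finset.univ.filter (fun i => d i ≠ 0)).card
      + (Finset.univ.filter (fun i => ¬ d i ≠ 0)).card = n := by
    rw [Finset.card_filter_add_card_filter_not]; simp
  have hcastcard : ((Finset.univ.filter (fun i => ¬ d i ≠ 0)).card : ℝ)
      + ((Finset.univ.filter (fun i => d i ≠ 0)).card : ℝ) = n := by
    rw [add_comm]; exact_mod_cast hcard
  rcases Finset.eq_empty_or_nonempty (Finset.univ.filter (fun i => d i ≠ 0)) with hZe | hZne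
  · rw [hsplit, hz0, hZe]
    have : ((Finset.univ.filter (fun i => ¬ d i ≠ 0)).card : ℝ) = n := by
      rw [hZe] at hcastcard; simpa using hcastcard
    rw [this]
    have hk1' : (1:ℝ) ≤ k := by exact_mod_cast hk1
    simp only [Finset.sum_empty]
    linarith
  · have hpos : 0 < ∑ i ∈ Finset.univ.filter (fun i => d i ≠ 0), ((1+d i)⁻¹)^2 :=
      Finset.sum_pos (fun i _ => pow_pos (inv_pos.mpr (hd1 i)) 2) hZne
    have hkb : ((Finset.univ.filter (fun i => d i ≠ 0)).card : ℝ) ≤ k := by exact_mod_cast hrank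
    rw [hsplit, hz0]
    linarith

/-- Best bilevel risk, random constant vectors, `k < n`:
`inf_{T ∈ A_k} E_const(T) = (σ²/2)(n − k)` and the infimum is not attained. -/
theorem best_bilevel_const_k_lt_n (n k : ℕ) (hn : 2 ≤ n) (hk1 : 1 ≤ k) (hk : k < n)
    (μ θ : ℝ) (σ : ℝ) (hσ : 0 < σ) :
    IsGLB (Econst n μ θ σ '' bilevelSet k n) (σ ^ 2 / 2 * ((n : ℝ) - (k : ℝ))) ∧
    ∀ T ∈ bilevelSet k n, σ ^ 2 / 2 * ((n : ℝ) - (k : ℝ)) < Econst n μ θ σ T := by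
  have hL : ∀ T ∈ bilevelSet k n, σ^2/2 * ((n:ℝ) - (k:ℝ)) < Econst n μ θ σ T := by
    rintro T ⟨R, rfl⟩
    have h1 := frob_lower n k hk1 R
    have h2 : 0 ≤ (μ^2+θ^2)/2
        * (∑ i : Fin n, ((((1 + Rᵀ*R)⁻¹ : Matrix (Fin n) (Fin n) ℝ) - 1).mulVec
            (fun _ : Fin n => 1) i)^2) :=
      mul_nonneg (by positivity) (Finset.sum_nonneg fun i _ => sq_nonneg _)
    have h3 : σ^2/2 * ((n:ℝ) - (k:ℝ))
        < σ^2/2 * ∑ i : Fin n, ∑ j : Fin n, (((1 + Rᵀ*R)⁻¹ : Matrix (Fin n) (Fin n) ℝ) i j)^2 :=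
      mul_lt_mul_of_pos_left h1 (by positivity)
    unfold Econst
    linarith
  refine ⟨⟨?_, ?_⟩, hL⟩
  · rintro x ⟨T, hT, rfl⟩
    exact (hL T hT).le
  · intro b hb
    by_contra hcon
    push_neg at hcon
    set L := σ^2/2 * ((n:ℝ) - (k:ℝ)) with hLdef
    have hεpos : 0 < b - L := sub_pos.2 hcon
    set ε := b - L with hε
    set t := Real.sqrt (σ^2*(k:ℝ)/ε) with ht
    have ht2 : t^2 = σ^2*(k:ℝ)/ε := Real.sq_sqrt (by positivity)
    have hmem : Econst n μ θ σ ((1 + (t • nuMat k n)ᵀ * (t • nuMat k n))⁻¹)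
        ∈ Econst n μ θ σ '' bilevelSet k n :=
      ⟨_, ⟨t • nuMat k n, rfl⟩, rfl⟩
    have hble := hb hmem
    rw [econst_value hk μ θ σ t] at hble
    have hk0 : (1:ℝ) ≤ (k:ℝ) := by exact_mod_cast hk1
    have hineq : σ^2/2 * ((k:ℝ)*((1+t^2)⁻¹)^2) < ε := by
      rw [ht2]
      set s := σ^2*(k:ℝ)/ε with hs
      have hs0 : 0 < s := by positivity
      have hεs : ε * s = σ^2*(k:ℝ) := by rw [hs]; field_simp
      have hqpos : (0:ℝ) < 1 + s := by linarith
      have hq2pos : (0:ℝ) < (1+s)^2 := by positivity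
      rw [inv_pow, ← div_eq_mul_inv]
      have hshape : σ^2/2 * ((k:ℝ)/(1+s)^2) = (σ^2*(k:ℝ)/2)/(1+s)^2 := by ring
      rw [hshape, div_lt_iff₀ hq2pos]
      nlinarith [mul_pos hεpos hs0, sq_nonneg s, mul_pos hσ hσ]
    have hlt : σ^2/2 * (((n:ℝ) - (k:ℝ)) + (k:ℝ)*((1+t^2)⁻¹)^2) < b := by
      have hsplit : σ^2/2 * (((n:ℝ) - (k:ℝ)) + (k:ℝ)*((1+t^2)⁻¹)^2)
          = L + σ^2/2 * ((k:ℝ)*((1+t^2)⁻¹)^2) := by rw [hLdef]; ring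
      rw [hsplit]
      linarith
    exact absurd hble (not_le.2 hlt)
end

section
/- Let n ≥ 2, let k be a natural number with k < n, let N ≥ 2 be an even natural number, 0 < ω < 2, μ, θ ∈ ℝ and σ > 0. Then the minimum of E_const over B_{N,k,ω} is attained, and min_{T ∈ B_{N,k,ω}} E_const(T) = ((μ² + θ²)/2)·n·(ρ_{N,ω} − 1)² + (σ²/2)·(n − k)·ρ_{N,ω}². -/
open Matrix
open RealInnerProductSpace

section AuxLemmas


lemma sum_pair (f : ℕ → ℝ) (M : ℕ) :
    ∑ j ∈ Finset.range (2*M), f j = ∑ m ∈ Finset.range M, (f (2*m) + f (2*m+1)) := by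
  induction M with
  | zero => simp
  | succ M ih =>
    have h2 : 2 * (M+1) = (2*M + 1) + 1 := by ring
    rw [h2, Finset.sum_range_succ, Finset.sum_range_succ, ih, Finset.sum_range_succ, add_assoc]

lemma key_scalar (M : ℕ) (a b : ℝ) (ha1 : -1 < a) (ha2 : a < 1) (hb : b ≤ a) :
    ∑ j ∈ Finset.range (2*M), a ^ j * b ^ (2*M - 1 - j) ≤ ∑ j ∈ Finset.range (2*M), a ^ j := by
  rw [sum_pair, sum_pair]
  apply Finset.sum_le_sum
  intro m hm
  rw [Finset.mem_range] at hm
  have h1 : 2*M - 1 - 2*m = 2*(M-1-m) + 1 := by omega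
  have h2 : 2*M - 1 - (2*m+1) = 2*(M-1-m) := by omega
  rw [h1, h2]
  set e := M - 1 - m
  have hA : (0:ℝ) ≤ a ^ (2*m) := by rw [pow_mul]; positivity
  have hB : (0:ℝ) ≤ b ^ (2*e) := by rw [pow_mul]; positivity
  have key : b ^ (2*e) * (a + b) ≤ 1 + a := by
    rcases le_or_gt (a + b) 0 with h | h
    · nlinarith
    · have hbgt : -1 < b := by nlinarith
      have hblt : b < 1 := lt_of_le_of_lt hb ha2
      have hb2 : b ^ (2*e) ≤ 1 := by
        rw [pow_mul]
        apply pow_le_one₀ (by positivity)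
        nlinarith
      nlinarith
  have expand : a ^ (2*m) * b ^ (2*e+1) + a ^ (2*m+1) * b ^ (2*e)
      = a ^ (2*m) * (b ^ (2*e) * (a + b)) := by ring
  have expand2 : a ^ (2*m) + a ^ (2*m+1) = a ^ (2*m) * (1 + a) := by ring
  rw [expand, expand2]
  exact mul_le_mul_of_nonneg_left key hA

lemma psi_le_rho (N : ℕ) (hN : Even N) (ω : ℝ) (hω0 : 0 < ω) (hω2 : ω < 2)
    (lam : ℝ) (hlam : 1 ≤ lam) :
    (1 - (1 - ω*lam) ^ N) / lam ≤ 1 - (1-ω) ^ N := by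
  obtain ⟨M, hM⟩ := hN
  have hN2 : N = 2*M := by omega
  subst hN2
  have hlam0 : (0:ℝ) < lam := by linarith
  rw [div_le_iff₀ hlam0]
  set a : ℝ := 1 - ω with ha
  set b : ℝ := 1 - ω*lam with hbdef
  have ha1 : -1 < a := by rw [ha]; linarith
  have ha2 : a < 1 := by rw [ha]; linarith
  have ht : (0:ℝ) ≤ lam - 1 := by linarith
  have hb : b ≤ a := by rw [ha, hbdef]; nlinarith
  have hgeo2 : (∑ j ∈ Finset.range (2*M), a ^ j * b ^ (2*M - 1 - j)) * (a - b)
      = a ^ (2*M) - b ^ (2*M) := geom_sum₂_mul a b (2*M)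
  have hgeo : (∑ j ∈ Finset.range (2*M), a ^ j) * (a - 1) = a ^ (2*M) - 1 :=
    geom_sum_mul a (2*M)
  have hkey := key_scalar M a b ha1 ha2 hb
  have hω : ω = 1 - a := by rw [ha]; ring
  have e1 : 1 - a ^ (2*M) = (∑ j ∈ Finset.range (2*M), a ^ j) * ω := by
    rw [hω]; linear_combination hgeo
  have e2 : a ^ (2*M) - b ^ (2*M)
      = (∑ j ∈ Finset.range (2*M), a ^ j * b ^ (2*M - 1 - j)) * (ω * (lam - 1)) := by
    have hab : a - b = ω * (lam - 1) := by rw [ha, hbdef]; ring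
    rw [← hab]; linear_combination -hgeo2
  have h := mul_le_mul_of_nonneg_left hkey (mul_nonneg hω0.le ht)
  have final : (1 - a ^ (2*M)) * lam - (1 - b ^ (2*M))
      = ω * (lam-1) * (∑ j ∈ Finset.range (2*M), a ^ j)
        - ω * (lam-1) * (∑ j ∈ Finset.range (2*M), a ^ j * b ^ (2*M - 1 - j)) := by
    linear_combination (lam - 1) * e1 - e2
  nlinarith [final, h]


lemma exists_ortho_rows (n k : ℕ) (hn : 1 ≤ n) (hk : k < n) :
    ∃ v : Fin k → (Fin n → ℝ),
      (∀ i i', ∑ j, v i j * v i' j = if i = i' then 1 else 0) ∧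
      (∀ i, ∑ j, v i j = 0) := by
  haveI : Fact (Module.finrank ℝ (EuclideanSpace ℝ (Fin n)) = (n-1) + 1) :=
    ⟨by rw [finrank_euclideanSpace, Fintype.card_fin]; omega⟩
  set u : EuclideanSpace ℝ (Fin n) := WithLp.toLp 2 (fun _ => 1) with hu_def
  have hu : u ≠ 0 := by
    intro h
    have := congrArg (· ⟨0, by omega⟩) h
    norm_num [hu_def] at this
  set b := OrthonormalBasis.fromOrthogonalSpanSingleton (𝕜 := ℝ) (n-1) hu with hb
  set emb : Fin k → Fin (n-1) := fun i => ⟨i.1, by omega⟩ with hemb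
  refine ⟨fun i => fun j => ((b (emb i) : EuclideanSpace ℝ (Fin n)) j), ?_, ?_⟩
  · intro i i'
    have horth := b.orthonormal
    rw [orthonormal_iff_ite] at horth
    have h1 := horth (emb i) (emb i')
    rw [Submodule.coe_inner] at h1
    rw [PiLp.inner_apply] at h1
    simp only [RCLike.inner_apply, starRingEnd_apply, star_trivial] at h1
    refine (Finset.sum_congr rfl (fun j _ => mul_comm _ _)).trans ?_
    rw [h1]
    have : (emb i = emb i') ↔ (i = i') := by
      constructor
      · intro h; ext; simpa [hemb, Fin.ext_iff] using congrArg Fin.val h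
      · intro h; rw [h]
    simp [this]
  · intro i
    have hmem := (b (emb i)).2
    have h0 : ⟪u, ((b (emb i) : EuclideanSpace ℝ (Fin n)))⟫ = 0 :=
      hmem u (Submodule.mem_span_singleton_self u)
    rw [PiLp.inner_apply] at h0
    simp only [RCLike.inner_apply, starRingEnd_apply, star_trivial, hu_def, one_mul] at h0
    simpa using h0


lemma idem_pow {n : ℕ} (Q P : Matrix (Fin n) (Fin n) ℝ) (hQ : Q*Q = Q) (hP : P*P = P)
    (hQP : Q*P = 0) (hPQ : P*Q = 0) (hsum : Q + P = 1) (α β : ℝ) : ∀ m : ℕ,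
    (α•Q + β•P)^m = α^m•Q + β^m•P
  | 0 => by simpa using hsum.symm
  | (m+1) => by
    rw [pow_succ, idem_pow Q P hQ hP hQP hPQ hsum α β m]
    rw [add_mul, mul_add, mul_add, smul_mul_assoc, smul_mul_assoc, smul_mul_assoc,
      smul_mul_assoc, mul_smul_comm, mul_smul_comm, mul_smul_comm, mul_smul_comm,
      hQ, hP, hQP, hPQ]
    simp [smul_smul, ← pow_succ]

lemma sq_sum_orth {n : ℕ} (W : Matrix (Fin n) (Fin n) ℝ) (hW : Wᵀ * W = 1)
    (z : Fin n → ℝ) : ∑ i, (W *ᵥ z) i ^ 2 = ∑ i, z i ^ 2 := by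
  have h1 : ∑ i, (W *ᵥ z) i ^ 2 = (W *ᵥ z) ⬝ᵥ (W *ᵥ z) := by
    simp [dotProduct, pow_two]
  have h2 : ∑ i, z i ^ 2 = z ⬝ᵥ z := by simp [dotProduct, pow_two]
  rw [h1, h2, Matrix.dotProduct_mulVec, ← Matrix.mulVec_transpose, Matrix.mulVec_mulVec, hW,
    Matrix.one_mulVec]


end AuxLemmas

lemma mem_value (n k N : ℕ) (hn : 2 ≤ n) (hk : k < n) (hN : Even N)
    (ω : ℝ) (hω0 : 0 < ω) (hω2 : ω < 2) (μ θ σ : ℝ) :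
    ∃ T ∈ unrollingSet N k n ω, Econst n μ θ σ T =
      (μ ^ 2 + θ ^ 2) / 2 * (n : ℝ) * ((1 - (1 - ω) ^ N) - 1) ^ 2
        + σ ^ 2 / 2 * ((n : ℝ) - (k : ℝ)) * (1 - (1 - ω) ^ N) ^ 2 := by
  obtain ⟨v, hvo, hvs⟩ := exists_ortho_rows n k (by omega) hk
  set c : ℝ := (2 - ω)/ω with hc
  have hc0 : 0 < c := div_pos (by linarith) hω0
  have hcne : c ≠ 0 := ne_of_gt hc0
  set R : Matrix (Fin k) (Fin n) ℝ := fun i j => Real.sqrt c * v i j with hR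
  have hRRT : R * Rᵀ = c • (1 : Matrix (Fin k) (Fin k) ℝ) := by
    ext i i'
    have hterm : ∀ j, R i j * Rᵀ j i' = c * (v i j * v i' j) := by
      intro j
      rw [Matrix.transpose_apply, hR]
      simp only
      have h : Real.sqrt c * v i j * (Real.sqrt c * v i' j)
          = (Real.sqrt c * Real.sqrt c) * (v i j * v i' j) := by ring
      rw [h, Real.mul_self_sqrt hc0.le]
    rw [Matrix.mul_apply]
    simp_rw [hterm, ← Finset.mul_sum, hvo i i']
    simp [Matrix.one_apply, mul_ite]
  have hR1 : R *ᵥ (fun _ => (1:ℝ)) = 0 := by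
    ext i
    simp only [Matrix.mulVec, dotProduct, hR, mul_one]
    rw [← Finset.mul_sum, hvs i, mul_zero]
    rfl
  set S := Rᵀ * R with hS
  have hSsym : Sᵀ = S := by rw [hS, Matrix.transpose_mul, Matrix.transpose_transpose]
  have hSS : S * S = c • S := by
    calc S * S = Rᵀ * (R * Rᵀ) * R := by rw [hS, Matrix.mul_assoc, ← Matrix.mul_assoc R Rᵀ R, ← Matrix.mul_assoc]
    _ = Rᵀ * (c • (1:Matrix (Fin k) (Fin k) ℝ)) * R := by rw [hRRT]
    _ = c • S := by rw [hS]; simp [Matrix.mul_smul, Matrix.smul_mul]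
  have hSv : S *ᵥ (fun _ => (1:ℝ)) = 0 := by
    rw [hS, ← Matrix.mulVec_mulVec, hR1, Matrix.mulVec_zero]
  have htrS : S.trace = c * k := by
    rw [hS, Matrix.trace_mul_comm, hRRT]
    simp [Matrix.trace_smul, Matrix.trace_one, mul_comm]
  obtain ⟨P, hPdef⟩ : ∃ P, P = c⁻¹ • S := ⟨_, rfl⟩
  obtain ⟨Q, hQdef⟩ : ∃ Q, Q = (1 : Matrix (Fin n) (Fin n) ℝ) - P := ⟨_, rfl⟩
  have hsum : Q + P = 1 := by rw [hQdef]; abel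
  have hP : P * P = P := by
    rw [hPdef, Matrix.smul_mul, Matrix.mul_smul, hSS, smul_smul, smul_smul]
    congr 1
    field_simp
  have hQP : Q * P = 0 := by rw [hQdef, Matrix.sub_mul, Matrix.one_mul, hP, sub_self]
  have hPQ : P * Q = 0 := by rw [hQdef, Matrix.mul_sub, Matrix.mul_one, hP, sub_self]
  have hQ : Q * Q = Q := by
    have h' : Q * (Q + P) = Q := by rw [hsum, Matrix.mul_one]
    rwa [Matrix.mul_add, hQP, add_zero] at h'
  have hωne : ω ≠ 0 := ne_of_gt hω0
  have h2ω : 2 - ω ≠ 0 := by intro h; apply hωne; linarith [h]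
  have hA : (1 : Matrix (Fin n) (Fin n) ℝ) + S = Q + (1+c) • P := by
    rw [hQdef, hPdef]
    match_scalars
    · ring
    · rw [hc]; field_simp; ring
  have hMeq : (1 : Matrix (Fin n) (Fin n) ℝ) - ω•(1 + S) = (1-ω)•Q + (-1:ℝ)•P := by
    rw [hQdef, hPdef]
    match_scalars
    · ring
    · rw [hc]; field_simp; ring
  obtain ⟨ρ, hρ⟩ : ∃ ρ : ℝ, ρ = 1 - (1-ω)^N := ⟨_, rfl⟩
  have hpowN : ((1:Matrix (Fin n) (Fin n) ℝ) - ω•(1 + S))^N = ((1-ω)^N)•Q + P := by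
    rw [hMeq, idem_pow Q P hQ hP hQP hPQ hsum (1-ω) (-1) N, hN.neg_one_pow, one_smul]
  have hBN : (1:Matrix (Fin n) (Fin n) ℝ)
      - ((1:Matrix (Fin n) (Fin n) ℝ) - ω•(1 + S))^N = ρ • Q := by
    rw [hpowN, ← hsum, hρ]
    module
  have h1c : (0:ℝ) < 1 + c := by linarith
  have h1cne : (1:ℝ) + c ≠ 0 := ne_of_gt h1c
  obtain ⟨B, hB⟩ : ∃ B, B = Q + (1+c)⁻¹ • P := ⟨_, rfl⟩
  have hAB : ((1:Matrix (Fin n) (Fin n) ℝ) + S) * B = 1 := by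
    rw [hA, hB, add_mul, mul_add, mul_add, smul_mul_assoc, smul_mul_assoc,
      mul_smul_comm, mul_smul_comm, hQ, hP, hQP, hPQ, smul_smul,
      mul_inv_cancel₀ h1cne, one_smul]
    simpa using hsum
  have hBA : B * ((1:Matrix (Fin n) (Fin n) ℝ) + S) = 1 := by
    rw [hA, hB, add_mul, mul_add, mul_add, smul_mul_assoc, smul_mul_assoc,
      mul_smul_comm, mul_smul_comm, hQ, hP, hQP, hPQ, smul_smul,
      inv_mul_cancel₀ h1cne, one_smul]
    simpa using hsum
  have hT : ((1:Matrix (Fin n) (Fin n) ℝ) + S)⁻¹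
      * ((1:Matrix (Fin n) (Fin n) ℝ) - ((1:Matrix (Fin n) (Fin n) ℝ) - ω•(1+S))^N)
      = ρ • Q := by
    rw [Matrix.inv_eq_left_inv hBA, hBN, hB, add_mul, smul_mul_assoc, mul_smul_comm,
      mul_smul_comm, hQ, hPQ, smul_zero, smul_zero, add_zero]
  have hQsym : Qᵀ = Q := by
    rw [hQdef, Matrix.transpose_sub, Matrix.transpose_one, hPdef, Matrix.transpose_smul, hSsym]
  have hQ1 : Q *ᵥ (fun _ => (1:ℝ)) = (fun _ => 1) := by
    rw [hQdef, Matrix.sub_mulVec, Matrix.one_mulVec, hPdef, Matrix.smul_mulVec, hSv,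
      smul_zero, sub_zero]
  have hvec : ((ρ • Q) - 1) *ᵥ (fun _ => (1:ℝ)) = fun _ => ρ - 1 := by
    rw [Matrix.sub_mulVec, Matrix.smul_mulVec, hQ1, Matrix.one_mulVec]
    ext i
    simp [smul_eq_mul]
  have htrQ : Q.trace = (n:ℝ) - k := by
    rw [hQdef, Matrix.trace_sub, Matrix.trace_one, hPdef, Matrix.trace_smul, htrS,
      smul_eq_mul, ← mul_assoc, inv_mul_cancel₀ hcne, one_mul]
    simp
  have hQji : ∀ i j, Q j i = Q i j := by
    intro i j
    conv_lhs => rw [← hQsym]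
    rw [Matrix.transpose_apply]
  have hfrob : ∑ i, ∑ j, ((ρ • Q) i j)^2 = ρ^2 * ((n:ℝ) - (k:ℝ)) := by
    have h1 : ∀ i j, ((ρ • Q) i j)^2 = ρ^2 * (Q i j * Q j i) := by
      intro i j
      rw [hQji i j, Matrix.smul_apply, smul_eq_mul]
      ring
    simp_rw [h1, ← Finset.mul_sum]
    congr 1
    calc ∑ i, ∑ j, Q i j * Q j i = ∑ i, (Q*Q) i i := by simp [Matrix.mul_apply]
      _ = Q.trace := by rw [hQ]; rfl
      _ = (n:ℝ) - k := htrQ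
  refine ⟨ρ • Q, ⟨R, ?_⟩, ?_⟩
  · rw [← hS, hT]
  · rw [Econst, hvec, hfrob]
    simp only [Finset.sum_const, Finset.card_univ, Fintype.card_fin, nsmul_eq_mul, hρ]
    ring

lemma lower_bound (n k N : ℕ) (hn : 2 ≤ n) (hk : k < n)
    (hN : Even N) (hN2 : 2 ≤ N) (ω : ℝ) (hω0 : 0 < ω) (hω2 : ω < 2)
    (μ θ : ℝ) (σ : ℝ) (hσ : 0 < σ) :
    ∀ T ∈ unrollingSet N k n ω,
      (μ ^ 2 + θ ^ 2) / 2 * (n : ℝ) * ((1 - (1 - ω) ^ N) - 1) ^ 2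
        + σ ^ 2 / 2 * ((n : ℝ) - (k : ℝ)) * (1 - (1 - ω) ^ N) ^ 2
      ≤ Econst n μ θ σ T := by
  rintro T ⟨R, hT⟩
  set ρ : ℝ := 1 - (1-ω)^N with hρ
  have hρ1 : ρ ≤ 1 := by
    have := hN.pow_nonneg (1-ω)
    rw [hρ]; linarith
  set S := Rᵀ * R with hS
  have htr : Rᵀ = Rᴴ := (Matrix.conjTranspose_eq_transpose_of_trivial R).symm
  have hherm : S.IsHermitian := by rw [hS, htr]; exact isHermitian_conjTranspose_mul_self R
  have hpsd : S.PosSemidef := by rw [hS, htr]; exact posSemidef_conjTranspose_mul_self R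
  set d : Fin n → ℝ := hherm.eigenvalues with hd
  set V : Matrix (Fin n) (Fin n) ℝ := (hherm.eigenvectorUnitary : Matrix (Fin n) (Fin n) ℝ)
    with hV
  have hV1 : star V * V = 1 := by
    have := hherm.eigenvectorUnitary.2
    rw [Unitary.mem_iff] at this
    exact this.1
  have hV2 : V * star V = 1 := by
    have := hherm.eigenvectorUnitary.2
    rw [Unitary.mem_iff] at this
    exact this.2
  have spec : S = V * Matrix.diagonal d * star V := by
    have h := hherm.spectral_theorem
    rw [Unitary.conjStarAlgAut_apply] at h
    exact h
  have hconj_mul : ∀ M M' : Matrix (Fin n) (Fin n) ℝ,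
      (V * M * star V) * (V * M' * star V) = V * (M * M') * star V := by
    intro M M'
    have h : star V * (V * (M' * star V)) = M' * star V := by
      rw [← Matrix.mul_assoc, hV1, Matrix.one_mul]
    simp only [Matrix.mul_assoc, h]
  have hconj_one : V * 1 * star V = 1 := by rw [Matrix.mul_one, hV2]
  have hconj_pow : ∀ (M : Matrix (Fin n) (Fin n) ℝ) (m : ℕ),
      (V * M * star V) ^ m = V * M ^ m * star V := by
    intro M m
    induction m with
    | zero => rw [pow_zero, pow_zero, hconj_one]
    | succ m ih => rw [pow_succ, pow_succ, ih, hconj_mul]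
  have hconj_sub : ∀ M M' : Matrix (Fin n) (Fin n) ℝ,
      (V * M * star V) - (V * M' * star V) = V * (M - M') * star V := by
    intro M M'
    rw [Matrix.mul_sub, Matrix.sub_mul]
  have hd0 : ∀ i, 0 ≤ d i := fun i => hpsd.eigenvalues_nonneg i
  have hlam : ∀ i, (0:ℝ) < 1 + d i := fun i => by linarith [hd0 i]
  set g : Fin n → ℝ := fun i => (1 - (1 - ω*(1 + d i))^N)/(1 + d i) with hg
  have hAdiag : (1 : Matrix (Fin n) (Fin n) ℝ) + S
      = V * Matrix.diagonal (fun i => 1 + d i) * star V := by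
    have h1 : Matrix.diagonal (fun i => 1 + d i)
        = 1 + Matrix.diagonal d := by rw [← Matrix.diagonal_add, Matrix.diagonal_one]
    rw [h1, Matrix.mul_add, Matrix.add_mul, hconj_one, ← spec]
  have hAinv : ((1 : Matrix (Fin n) (Fin n) ℝ) + S)⁻¹
      = V * Matrix.diagonal (fun i => (1 + d i)⁻¹) * star V := by
    apply Matrix.inv_eq_left_inv
    rw [hAdiag, hconj_mul, Matrix.diagonal_mul_diagonal]
    have h1 : (fun i => (1 + d i)⁻¹ * (1 + d i)) = fun _ : Fin n => (1:ℝ) := by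
      funext i
      exact inv_mul_cancel₀ (ne_of_gt (hlam i))
    rw [h1, Matrix.diagonal_one, hconj_one]
  have hBdiag : (1 : Matrix (Fin n) (Fin n) ℝ) - (1 - ω • ((1:Matrix (Fin n) (Fin n) ℝ) + S)) ^ N
      = V * Matrix.diagonal (fun i => 1 - (1 - ω*(1 + d i))^N) * star V := by
    have h1 : (1:Matrix (Fin n) (Fin n) ℝ) - ω • ((1:Matrix (Fin n) (Fin n) ℝ) + S)
        = V * Matrix.diagonal (fun i => 1 - ω*(1 + d i)) * star V := by
      have h2 : Matrix.diagonal (fun i => 1 - ω*(1 + d i))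
          = 1 - ω • Matrix.diagonal (fun i => 1 + d i) := by
        rw [← Matrix.diagonal_smul, ← Matrix.diagonal_sub, Matrix.diagonal_one]
        congr 1
      rw [h2, Matrix.mul_sub, Matrix.sub_mul, hconj_one, Matrix.mul_smul, Matrix.smul_mul,
        hAdiag]
    rw [h1, hconj_pow, ← hconj_one, hconj_sub]
    congr 2
    rw [Matrix.diagonal_pow, ← Matrix.diagonal_one, Matrix.diagonal_sub]
    congr 1
  have hTdiag : T = V * Matrix.diagonal g * star V := by
    rw [hT, hAinv, hBdiag, hconj_mul, Matrix.diagonal_mul_diagonal]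
    congr 2
    funext i
    rw [hg]
    simp only [div_eq_inv_mul]
  have hsVT : star V = Vᵀ := by
    rw [Matrix.star_eq_conjTranspose, Matrix.conjTranspose_eq_transpose_of_trivial]
  have hVtV : Vᵀ * V = 1 := by rw [← hsVT]; exact hV1
  have hVVt : (Vᵀ)ᵀ * Vᵀ = 1 := by rw [Matrix.transpose_transpose, ← hsVT]; exact hV2
  set u : Fin n → ℝ := (star V) *ᵥ (fun _ => 1) with hu
  have hsum_u : ∑ i, u i ^ 2 = n := by
    rw [hu, hsVT, sq_sum_orth (Vᵀ) hVVt]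
    simp
  have hsum1 : ∑ i, ((T - 1) *ᵥ (fun _ : Fin n => 1)) i ^ 2 = ∑ i, ((g i - 1) * u i)^2 := by
    have h1 : T - 1 = V * Matrix.diagonal (fun i => g i - 1) * star V := by
      rw [hTdiag, ← hconj_one, hconj_sub, ← Matrix.diagonal_one, Matrix.diagonal_sub]
    rw [h1, ← Matrix.mulVec_mulVec, ← Matrix.mulVec_mulVec, sq_sum_orth V hVtV, ← hu]
    refine Finset.sum_congr rfl (fun i _ => ?_)
    rw [Matrix.mulVec_diagonal]
  have hTt : Tᵀ = T := by
    rw [hTdiag, hsVT, Matrix.transpose_mul, Matrix.transpose_mul,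
      Matrix.transpose_transpose, Matrix.diagonal_transpose, Matrix.mul_assoc]
  have hTji : ∀ i j, T j i = T i j := by
    intro i j
    conv_lhs => rw [← hTt]
    rw [Matrix.transpose_apply]
  have hsum2 : ∑ i, ∑ j, (T i j)^2 = ∑ i, g i ^ 2 := by
    have h1 : Matrix.trace (T * T) = ∑ i, ∑ j, T i j * T j i := by
      simp [Matrix.trace, Matrix.diag, Matrix.mul_apply]
    have h2 : ∑ i, ∑ j, (T i j)^2 = Matrix.trace (T * T) := by
      rw [h1]
      refine Finset.sum_congr rfl (fun i _ => Finset.sum_congr rfl (fun j _ => ?_))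
      rw [hTji i j, pow_two]
    have h3 : Matrix.trace (T * T) = ∑ i, g i ^ 2 := by
      rw [hTdiag, hconj_mul, Matrix.diagonal_mul_diagonal, Matrix.trace_mul_cycle,
        hV1, Matrix.one_mul, Matrix.trace_diagonal]
      refine Finset.sum_congr rfl (fun i _ => (pow_two (g i)).symm)
    rw [h2, h3]
  have hg_le : ∀ i, g i ≤ ρ := by
    intro i
    rw [hg, hρ]
    exact psi_le_rho N hN ω hω0 hω2 (1 + d i) (by linarith [hd0 i])
  have hterm1 : ∀ i, (ρ-1)^2 * u i ^2 ≤ ((g i - 1) * u i)^2 := by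
    intro i
    rw [mul_pow]
    apply mul_le_mul_of_nonneg_right _ (sq_nonneg _)
    nlinarith [hg_le i, hρ1]
  have hlow1 : (n:ℝ) * (ρ-1)^2 ≤ ∑ i, ((g i - 1) * u i)^2 := by
    calc (n:ℝ) * (ρ-1)^2 = (ρ-1)^2 * ∑ i, u i ^2 := by rw [hsum_u]; ring
    _ = ∑ i, (ρ-1)^2 * u i ^2 := by rw [Finset.mul_sum]
    _ ≤ _ := Finset.sum_le_sum (fun i _ => hterm1 i)
  have hrank : S.rank ≤ k := by
    rw [hS]
    exact le_trans (Matrix.rank_mul_le_right Rᵀ R)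
      (le_trans R.rank_le_card_height (le_of_eq (Fintype.card_fin k)))
  have hcard_ne : Fintype.card {i // d i ≠ 0} ≤ k := by
    rw [hd, ← hherm.rank_eq_card_non_zero_eigs]
    exact hrank
  set Z := Finset.univ.filter (fun i => d i = 0) with hZ
  have hZcard : n - k ≤ Z.card := by
    have h1 : Z.card + (Finset.univ.filter (fun i => ¬ d i = 0)).card = n := by
      rw [hZ, Finset.card_filter_add_card_filter_not]
      simp
    have h2 : (Finset.univ.filter (fun i => ¬ d i = 0)).card ≤ k := by
      have := hcard_ne
      rwa [Fintype.card_subtype] at this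
    omega
  have hgz : ∀ i ∈ Z, g i = ρ := by
    intro i hi
    rw [hZ, Finset.mem_filter] at hi
    rw [hg, hρ]
    simp only [hi.2]
    norm_num
  have hlow2 : ((n:ℝ) - k) * ρ^2 ≤ ∑ i, g i ^2 := by
    have h1 : ∑ i ∈ Z, g i ^2 ≤ ∑ i, g i ^2 :=
      Finset.sum_le_sum_of_subset_of_nonneg (Finset.subset_univ Z) (fun i _ _ => sq_nonneg _)
    have h2 : ∑ i ∈ Z, g i ^2 = (Z.card : ℝ) * ρ^2 := by
      rw [Finset.sum_congr rfl (fun i hi => by rw [hgz i hi]), Finset.sum_const, nsmul_eq_mul]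
    have h3 : ((n:ℝ) - k) ≤ (Z.card : ℝ) := by
      have hcast : ((n - k : ℕ) : ℝ) ≤ (Z.card : ℝ) := Nat.cast_le.mpr hZcard
      rwa [Nat.cast_sub hk.le] at hcast
    nlinarith [sq_nonneg ρ]
  have hc1 : (0:ℝ) ≤ (μ^2+θ^2)/2 := by positivity
  have hc2 : (0:ℝ) ≤ σ^2/2 := by positivity
  rw [Econst, hsum1, hsum2]
  have e1 : (μ ^ 2 + θ ^ 2) / 2 * (n:ℝ) * (ρ - 1) ^ 2
      = (μ ^ 2 + θ ^ 2) / 2 * ((n:ℝ) * (ρ - 1) ^ 2) := by ring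
  have e2 : σ ^ 2 / 2 * ((n:ℝ) - k) * ρ ^ 2 = σ ^ 2 / 2 * (((n:ℝ) - k) * ρ ^ 2) := by ring
  rw [e1, e2]
  exact add_le_add (mul_le_mul_of_nonneg_left hlow1 hc1) (mul_le_mul_of_nonneg_left hlow2 hc2)

/-- Best unrolling risk, random constant vectors, `N` even, `k < n`:
the minimum of `E_const` over `B_{N,k,ω}` is attained and equals
`((μ²+θ²)/2)·n·(ρ_{N,ω} − 1)² + (σ²/2)·(n−k)·ρ_{N,ω}²` where `ρ_{N,ω} = 1 − (1−ω)^N`. -/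
theorem best_unrolling_const_even_k_lt_n (n k N : ℕ) (hn : 2 ≤ n) (hk : k < n)
    (hN : Even N) (hN2 : 2 ≤ N) (ω : ℝ) (hω0 : 0 < ω) (hω2 : ω < 2)
    (μ θ : ℝ) (σ : ℝ) (hσ : 0 < σ) :
    IsLeast (Econst n μ θ σ '' unrollingSet N k n ω)
      ((μ ^ 2 + θ ^ 2) / 2 * (n : ℝ) * ((1 - (1 - ω) ^ N) - 1) ^ 2
        + σ ^ 2 / 2 * ((n : ℝ) - (k : ℝ)) * (1 - (1 - ω) ^ N) ^ 2) := by
  constructor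
  · obtain ⟨T, hT, hval⟩ := mem_value n k N hn hk hN ω hω0 hω2 μ θ σ
    exact ⟨T, hT, hval⟩
  · rintro x ⟨T, hT, rfl⟩
    exact lower_bound n k N hn hk hN hN2 ω hω0 hω2 μ θ σ hσ T hT
end

section
/- Let n ≥ 1, let N ≥ 2 be an even natural number, 0 < ω < 2, μ, θ ∈ ℝ and σ > 0. Set C₁ = n(μ² + θ²)/(n(μ² + θ²) + σ²) and C₁min = min{C₁, ρ_{N,ω}}. Then the minimum of E_const over B_{N,n,ω} is attained, and min_{T ∈ B_{N,n,ω}} E_const(T) = ((μ² + θ²)/2)·n·(C₁min − 1)² + (σ²/2)·C₁min². -/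
open Matrix Finset

section AuxScalar

private lemma dsum_identity (u : ℝ) (M : ℕ) :
    (1 - u)^2 * (∑ k ∈ Finset.range M, ((k : ℝ) + 1) * u ^ k)
      = 1 - ((M : ℝ) + 1) * u ^ M + (M : ℝ) * u ^ (M + 1) := by
  induction M with
  | zero => simp
  | succ m ih =>
    rw [Finset.sum_range_succ, mul_add, ih]
    push_cast
    ring

private lemma dsum_nonneg {M : ℕ} (hM : Odd M) (u : ℝ) :
    0 ≤ ∑ k ∈ Finset.range M, ((k : ℝ) + 1) * u ^ k := by
  rcases le_or_gt 0 u with hu | hu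
  · exact Finset.sum_nonneg fun k _ => mul_nonneg (by positivity) (pow_nonneg hu k)
  · have h1 : (0:ℝ) < (1 - u)^2 := by nlinarith
    have h2 : u ^ M ≤ 0 := hM.pow_nonpos hu.le
    have h3 : 0 ≤ u ^ (M+1) := by
      rw [pow_succ]
      nlinarith
    have h4 : 0 ≤ (1 - u)^2 * (∑ k ∈ Finset.range M, ((k : ℝ) + 1) * u ^ k) := by
      rw [dsum_identity]
      have : 0 ≤ (M:ℝ) := Nat.cast_nonneg M
      nlinarith
    exact nonneg_of_mul_nonneg_right h4 h1

private lemma geomSum_mono {N : ℕ} (hN : Even N) :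
    Monotone (fun u : ℝ => ∑ k ∈ Finset.range N, u ^ k) := by
  rcases Nat.eq_zero_or_pos N with h0 | hpos
  · subst h0; simp [monotone_const]
  obtain ⟨M, hM⟩ : ∃ M, N = M + 1 := ⟨N-1, (Nat.succ_pred_eq_of_pos hpos).symm⟩
  have hModd : Odd M := by
    rcases hN with ⟨r, hr⟩
    refine ⟨r - 1, by omega⟩
  have hderiv : ∀ u : ℝ, HasDerivAt (fun u : ℝ => ∑ k ∈ Finset.range N, u ^ k)
      (∑ k ∈ Finset.range M, ((k:ℝ)+1) * u ^ k) u := by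
    intro u
    have h := HasDerivAt.fun_sum (fun k (_ : k ∈ Finset.range N) =>
      hasDerivAt_pow k u)
    refine h.congr_deriv (Eq.symm ?_)
    rw [hM, Finset.sum_range_succ']
    push_cast
    simp
  apply monotone_of_deriv_nonneg
  · exact fun u => (hderiv u).differentiableAt
  · intro u; rw [(hderiv u).deriv]; exact dsum_nonneg hModd u

private lemma omega_geomSum (ω : ℝ) (N : ℕ) :
    ω * ∑ k ∈ Finset.range N, (1-ω)^k = 1 - (1-ω)^N := by
  have h := geom_sum_mul (1-ω) N
  linear_combination -h

private lemma final_scalar {a b ρ en s : ℝ} (ha : 0 ≤ a) (hb : 0 < b) (hen : 0 < en)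
    (hs : s ≤ ρ * en) :
    a * en * (min (a * en / (a * en + b)) ρ - 1)^2 + b * (min (a * en / (a * en + b)) ρ)^2
      ≤ a * (s - en)^2 / en + b * s^2 / en^2 := by
  have hab : 0 < a * en + b := by nlinarith
  set C : ℝ := a * en / (a * en + b) with hCdef0
  have hCdef : C * (a * en + b) = a * en := by
    rw [hCdef0, div_mul_cancel₀]
    exact hab.ne'
  have hconv : a * (s - en)^2 / en + b * s^2 / en^2
      = a * en * (s/en - 1)^2 + b * (s/en)^2 := by
    field_simp
  rw [hconv]
  set t : ℝ := s / en with htdef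
  have hst : t ≤ ρ := by
    rw [htdef, div_le_iff₀ hen]
    linarith [hs]
  rcases le_total C ρ with h | h
  · rw [min_eq_left h]
    nlinarith [sq_nonneg (t - C), hCdef]
  · rw [min_eq_right h]
    have h1 : 0 ≤ ρ - t := by linarith
    have h2 : (a * en + b) * ρ ≤ a * en := by nlinarith [hCdef]
    have h3 : 0 ≤ 2*(a*en) - (a*en+b)*(t+ρ) := by nlinarith [h2]
    nlinarith [mul_nonneg h1 h3]

end AuxScalar

section AuxMatrix

private lemma real_ct {m k : ℕ} (A : Matrix (Fin m) (Fin k) ℝ) : Aᴴ = Aᵀ := by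
  ext i j
  simp [Matrix.conjTranspose_apply]

private lemma smul_hermitian {n : ℕ} (c : ℝ) {A : Matrix (Fin n) (Fin n) ℝ}
    (hA : A.IsHermitian) : (c • A).IsHermitian := by
  have h : (c • A)ᴴ = c • Aᴴ := by rw [Matrix.conjTranspose_smul]; simp
  rw [Matrix.IsHermitian, h, hA]

private lemma eigenvalues_le_of_posSemidef {n : ℕ} {A : Matrix (Fin n) (Fin n) ℝ}
    (hA : A.IsHermitian)
    {c : ℝ} (h : (c • (1 : Matrix (Fin n) (Fin n) ℝ) - A).PosSemidef) (i : Fin n) :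
    hA.eigenvalues i ≤ c := by
  have hv := hA.mulVec_eigenvectorBasis i
  set v : Fin n → ℝ := ⇑(hA.eigenvectorBasis i) with hvdef
  have hvne : v ≠ 0 := by
    have := hA.eigenvectorBasis.orthonormal.ne_zero i
    intro hcontra
    apply this
    ext j
    exact congrFun hcontra j
  have hq : 0 < v ⬝ᵥ v := by
    obtain ⟨j, hj⟩ := Function.ne_iff.mp hvne
    refine Finset.sum_pos' (fun k _ => mul_self_nonneg _) ⟨j, Finset.mem_univ j, ?_⟩
    exact mul_self_pos.mpr hj
  have h2 := h.dotProduct_mulVec_nonneg v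
  rw [sub_mulVec, smul_mulVec, one_mulVec, hv] at h2
  have hstar : star v = v := by ext j; simp
  rw [hstar, dotProduct_sub, dotProduct_smul, dotProduct_smul] at h2
  have : 0 ≤ (c - hA.eigenvalues i) * (v ⬝ᵥ v) := by
    simpa [smul_eq_mul, sub_mul] using h2
  nlinarith

private lemma quad_form_poly {n : ℕ} {A : Matrix (Fin n) (Fin n) ℝ} (hA : A.IsHermitian)
    (N : ℕ) (v : Fin n → ℝ) :
    ∃ w : Fin n → ℝ,
      v ⬝ᵥ ((∑ k ∈ Finset.range N, A ^ k) *ᵥ v)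
          = ∑ i, (∑ k ∈ Finset.range N, hA.eigenvalues i ^ k) * (w i) ^ 2
        ∧ v ⬝ᵥ v = ∑ i, (w i) ^ 2 := by
  classical
  set V : Matrix (Fin n) (Fin n) ℝ := (hA.eigenvectorUnitary : Matrix (Fin n) (Fin n) ℝ) with hVdef
  set W : Matrix (Fin n) (Fin n) ℝ := star V with hWdef
  have hVW : V * W = 1 := (Matrix.mem_unitaryGroup_iff).mp hA.eigenvectorUnitary.2
  have hWV : W * V = 1 := Unitary.coe_star_mul_self hA.eigenvectorUnitary
  set d : Fin n → ℝ := hA.eigenvalues with hddef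
  have hspec : A = V * Matrix.diagonal d * W := by
    have h := hA.spectral_theorem
    rw [Unitary.conjStarAlgAut_apply] at h
    exact h
  have hquad : ∀ g : Fin n → ℝ,
      v ⬝ᵥ ((V * Matrix.diagonal g * W) *ᵥ v) = ∑ i, g i * ((W *ᵥ v) i) ^ 2 := by
    intro g
    have hWt : Vᵀ = W := by
      rw [hWdef, Matrix.star_eq_conjTranspose, real_ct]
    rw [← Matrix.mulVec_mulVec, ← Matrix.mulVec_mulVec, Matrix.dotProduct_mulVec v V,
      ← Matrix.mulVec_transpose, hWt]
    simp only [Matrix.mulVec_diagonal, dotProduct]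
    exact Finset.sum_congr rfl fun i _ => by ring
  have hpow : ∀ k : ℕ, A ^ k = V * Matrix.diagonal (fun i => d i ^ k) * W := by
    intro k
    induction k with
    | zero =>
      simp only [pow_zero]
      have : Matrix.diagonal (fun i : Fin n => (1:ℝ)) = 1 := Matrix.diagonal_one
      rw [this, Matrix.mul_one, hVW]
    | succ k ih =>
      rw [pow_succ, ih, hspec]
      have : V * Matrix.diagonal (fun i => d i ^ k) * W * (V * Matrix.diagonal d * W)
          = V * (Matrix.diagonal (fun i => d i ^ k) * Matrix.diagonal d) * W := by
        rw [show V * Matrix.diagonal (fun i => d i ^ k) * W * (V * Matrix.diagonal d * W)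
            = V * Matrix.diagonal (fun i => d i ^ k) * (W * V) * Matrix.diagonal d * W by
          simp only [Matrix.mul_assoc], hWV]
        simp only [Matrix.mul_one, Matrix.mul_assoc]
      rw [this, Matrix.diagonal_mul_diagonal]
      have h' : (fun i => d i ^ k * d i) = fun i => d i ^ (k+1) :=
        funext fun i => (pow_succ _ _).symm
      rw [h']
  have hsum : (∑ k ∈ Finset.range N, A ^ k)
      = V * Matrix.diagonal (fun i => ∑ k ∈ Finset.range N, d i ^ k) * W := by
    rw [Finset.sum_congr rfl fun k _ => hpow k]
    rw [← Finset.sum_mul, ← Finset.mul_sum]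
    congr 2
    ext i j
    by_cases hij : i = j
    · subst hij; simp [Matrix.sum_apply, Matrix.diagonal_apply_eq]
    · simp [Matrix.sum_apply, Matrix.diagonal_apply_ne _ hij]
  refine ⟨W *ᵥ v, ?_, ?_⟩
  · rw [hsum, hquad]
  · have h1 : v ⬝ᵥ v = v ⬝ᵥ ((V * Matrix.diagonal (fun _ : Fin n => (1:ℝ)) * W) *ᵥ v) := by
      rw [Matrix.diagonal_one, Matrix.mul_one, hVW, Matrix.one_mulVec]
    rw [h1, hquad]
    simp

private lemma M_posDef {n : ℕ} (R : Matrix (Fin n) (Fin n) ℝ) : (1 + Rᵀ * R).PosDef := by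
  have h := Matrix.posSemidef_conjTranspose_mul_self R
  rw [real_ct] at h
  exact Matrix.PosDef.add_posSemidef Matrix.PosDef.one h

private lemma U_hermitian {n : ℕ} (ω : ℝ) (R : Matrix (Fin n) (Fin n) ℝ) :
    (1 - ω • (1 + Rᵀ * R)).IsHermitian :=
  Matrix.isHermitian_one.sub (smul_hermitian ω (M_posDef R).isHermitian)

private lemma unroll_eq_smul_geom {n : ℕ} (N : ℕ) (ω : ℝ) (R : Matrix (Fin n) (Fin n) ℝ) :
    (1 + Rᵀ * R)⁻¹ * (1 - (1 - ω • (1 + Rᵀ * R)) ^ N)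
      = ω • ∑ k ∈ Finset.range N, (1 - ω • (1 + Rᵀ * R)) ^ k := by
  set M : Matrix (Fin n) (Fin n) ℝ := 1 + Rᵀ * R with hMdef
  set U : Matrix (Fin n) (Fin n) ℝ := 1 - ω • M with hUdef
  have hdet : IsUnit M.det := (M_posDef R).det_pos.ne'.isUnit
  have hgeom : M * (ω • ∑ k ∈ Finset.range N, U ^ k) = 1 - U ^ N := by
    rw [Matrix.mul_smul, ← Matrix.smul_mul]
    have h1 : ω • M = 1 - U := by rw [hUdef]; abel
    rw [h1]
    have h2 := mul_geom_sum U N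
    have h3 : (1 - U) * ∑ k ∈ Finset.range N, U ^ k
        = -((U - 1) * ∑ k ∈ Finset.range N, U ^ k) := by
      rw [← neg_mul, neg_sub]
    rw [h3, h2, neg_sub]
  rw [← hgeom, Matrix.nonsing_inv_mul_cancel_left _ _ hdet]

private lemma key_quad_bound {n N : ℕ} (hN : Even N) {ω : ℝ} (hω0 : 0 < ω)
    (R : Matrix (Fin n) (Fin n) ℝ) (v : Fin n → ℝ) :
    v ⬝ᵥ (((1 + Rᵀ * R)⁻¹ * (1 - (1 - ω • (1 + Rᵀ * R)) ^ N)) *ᵥ v)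
      ≤ (1 - (1-ω)^N) * (v ⬝ᵥ v) := by
  have hU := U_hermitian (n := n) ω R
  have hps : ((1-ω) • (1 : Matrix (Fin n) (Fin n) ℝ) - (1 - ω • (1 + Rᵀ * R))).PosSemidef := by
    have heq : (1-ω) • (1 : Matrix (Fin n) (Fin n) ℝ) - (1 - ω • (1 + Rᵀ * R))
        = ω • (Rᵀ * R) := by
      rw [smul_add, sub_smul, one_smul]
      abel
    rw [heq]
    have hpsd := Matrix.posSemidef_conjTranspose_mul_self R
    rw [real_ct] at hpsd
    refine .of_dotProduct_mulVec_nonneg (smul_hermitian ω hpsd.1) fun x => ?_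
    rw [smul_mulVec, dotProduct_smul, smul_eq_mul]
    exact mul_nonneg hω0.le (hpsd.dotProduct_mulVec_nonneg x)
  have hev : ∀ i, hU.eigenvalues i ≤ 1 - ω :=
    fun i => eigenvalues_le_of_posSemidef hU hps i
  rw [unroll_eq_smul_geom]
  obtain ⟨w, hw1, hw2⟩ := quad_form_poly hU N v
  rw [smul_mulVec, dotProduct_smul, smul_eq_mul, hw1, hw2]
  have hbd : ∑ i, (∑ k ∈ Finset.range N, hU.eigenvalues i ^ k) * w i ^ 2
      ≤ ∑ i, (∑ k ∈ Finset.range N, (1-ω) ^ k) * w i ^ 2 := by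
    apply Finset.sum_le_sum
    intro i _
    exact mul_le_mul_of_nonneg_right (geomSum_mono hN (hev i)) (sq_nonneg _)
  calc ω * ∑ i, (∑ k ∈ Finset.range N, hU.eigenvalues i ^ k) * w i ^ 2
      ≤ ω * ∑ i, (∑ k ∈ Finset.range N, (1-ω)^k) * w i ^ 2 :=
        mul_le_mul_of_nonneg_left hbd hω0.le
    _ = (1 - (1-ω)^N) * ∑ i, w i ^ 2 := by
        rw [← Finset.mul_sum, ← mul_assoc, omega_geomSum]

private lemma proj_combo_mul {n : ℕ} {P : Matrix (Fin n) (Fin n) ℝ} (hP : P * P = P)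
    (x y z w : ℝ) :
    (x • P + y • (1 - P)) * (z • P + w • (1 - P)) = (x*z) • P + (y*w) • (1 - P) := by
  have h1 : P * (1 - P) = 0 := by rw [Matrix.mul_sub, Matrix.mul_one, hP, sub_self]
  have h2 : (1 - P) * P = 0 := by rw [Matrix.sub_mul, Matrix.one_mul, hP, sub_self]
  have h3 : (1 - P) * (1 - P) = 1 - P := by
    rw [Matrix.mul_sub, Matrix.mul_one, h2, sub_zero]
  simp only [Matrix.add_mul, Matrix.mul_add, Matrix.smul_mul, Matrix.mul_smul,
    hP, h1, h2, h3, smul_zero, add_zero, zero_add, smul_smul]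
  module

private lemma proj_combo_pow {n : ℕ} {P : Matrix (Fin n) (Fin n) ℝ} (hP : P * P = P)
    (x y : ℝ) (k : ℕ) :
    (x • P + y • (1 - P)) ^ k = (x^k) • P + (y^k) • (1 - P) := by
  induction k with
  | zero =>
    rw [pow_zero, pow_zero, pow_zero, one_smul, one_smul]
    abel
  | succ k ih =>
    rw [pow_succ, ih, proj_combo_mul hP, ← pow_succ, ← pow_succ]

private lemma ivt_alpha {N : ℕ} (hN : Even N) {ω τ : ℝ} (hω0 : 0 < ω) (hω2 : ω < 2)
    (hτ0 : 0 ≤ τ) (hτρ : τ ≤ 1 - (1-ω)^N) :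
    ∃ α : ℝ, 1 ≤ α ∧ ω * ∑ k ∈ Finset.range N, (1 - ω*α)^k = τ := by
  have h12 : (1:ℝ) ≤ 2/ω := by
    rw [le_div_iff₀ hω0]
    linarith
  have hcont : Continuous (fun lam : ℝ => ω * ∑ k ∈ Finset.range N, (1 - ω*lam)^k) := by
    apply continuous_const.mul
    apply continuous_finset_sum
    intro k _
    exact ((continuous_const.sub (continuous_const.mul continuous_id)).pow k)
  have hg1 : (fun lam : ℝ => ω * ∑ k ∈ Finset.range N, (1 - ω*lam)^k) 1 = 1 - (1-ω)^N := by
    simp only [mul_one]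
    exact omega_geomSum ω N
  have hg2 : (fun lam : ℝ => ω * ∑ k ∈ Finset.range N, (1 - ω*lam)^k) (2/ω) = 0 := by
    have hx : 1 - ω * (2/ω) = -1 := by
      field_simp
      norm_num
    simp only [hx]
    rw [neg_one_geom_sum, if_pos hN, mul_zero]
  have hsub := intermediate_value_Icc' h12 hcont.continuousOn
  have hmem : τ ∈ Set.Icc ((fun lam : ℝ => ω * ∑ k ∈ Finset.range N, (1 - ω*lam)^k) (2/ω))
      ((fun lam : ℝ => ω * ∑ k ∈ Finset.range N, (1 - ω*lam)^k) 1) := by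
    rw [hg1, hg2]
    exact ⟨hτ0, hτρ⟩
  obtain ⟨α, hα, hgα⟩ := hsub hmem
  exact ⟨α, hα.1, hgα⟩

private lemma witness_exists {n N : ℕ} (hn : 1 ≤ n) (hN : Even N) {ω τ : ℝ}
    (hω0 : 0 < ω) (hω2 : ω < 2) (hτ0 : 0 ≤ τ) (hτρ : τ ≤ 1 - (1-ω)^N) :
    ∃ R : Matrix (Fin n) (Fin n) ℝ,
      (1 + Rᵀ * R)⁻¹ * (1 - (1 - ω • (1 + Rᵀ * R)) ^ N)
        = τ • Matrix.of (fun _ _ : Fin n => (1:ℝ)/n) := by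
  obtain ⟨α, hα1, hgα⟩ := ivt_alpha hN hω0 hω2 hτ0 hτρ
  have hα0 : (0:ℝ) < α := by linarith
  have hn0 : (0:ℝ) < n := by exact_mod_cast hn
  set P : Matrix (Fin n) (Fin n) ℝ := Matrix.of (fun _ _ : Fin n => (1:ℝ)/n) with hPdef
  have hPP : P * P = P := by
    ext i j
    simp only [Matrix.mul_apply, hPdef, Matrix.of_apply]
    rw [Finset.sum_const, Finset.card_univ, Fintype.card_fin, nsmul_eq_mul]
    field_simp
  have hPt : Pᵀ = P := by
    ext i j
    simp [hPdef]
  set s1 : ℝ := Real.sqrt (α - 1) with hs1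
  set s2 : ℝ := Real.sqrt (2/ω - 1) with hs2
  set R : Matrix (Fin n) (Fin n) ℝ := s1 • P + s2 • (1 - P) with hRdef
  have hRt : Rᵀ = R := by
    rw [hRdef, Matrix.transpose_add, Matrix.transpose_smul, Matrix.transpose_smul,
      Matrix.transpose_sub, Matrix.transpose_one, hPt]
  have hs11 : s1 * s1 = α - 1 := Real.mul_self_sqrt (by linarith)
  have hs22 : s2 * s2 = 2/ω - 1 := by
    apply Real.mul_self_sqrt
    rw [sub_nonneg, le_div_iff₀ hω0]
    linarith
  refine ⟨R, ?_⟩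
  have hM : 1 + Rᵀ * R = α • P + (2/ω) • (1 - P) := by
    rw [hRt, hRdef, proj_combo_mul hPP, hs11, hs22]
    module
  have hα0' : α ≠ 0 := hα0.ne'
  have hω0' : ω ≠ 0 := hω0.ne'
  have hMinv : (1 + Rᵀ * R)⁻¹ = α⁻¹ • P + (ω/2) • (1 - P) := by
    apply Matrix.inv_eq_right_inv
    rw [hM, proj_combo_mul hPP]
    rw [show α * α⁻¹ = 1 from mul_inv_cancel₀ hα0', show (2/ω) * (ω/2) = 1 by field_simp]
    rw [one_smul, one_smul]
    abel
  have hUeq : 1 - ω • (1 + Rᵀ * R) = (1 - ω*α) • P + (-1 : ℝ) • (1 - P) := by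
    rw [hM, smul_add, smul_smul, smul_smul, show ω * (2/ω) = 2 by field_simp]
    module
  have hUN : (1 - ω • (1 + Rᵀ * R)) ^ N = ((1-ω*α)^N) • P + (1:ℝ) • (1 - P) := by
    rw [hUeq, proj_combo_pow hPP, hN.neg_one_pow]
  have hsub : (1 : Matrix (Fin n) (Fin n) ℝ) - (((1-ω*α)^N) • P + (1:ℝ) • (1 - P))
      = (1 - (1-ω*α)^N) • P + (0:ℝ) • (1 - P) := by
    module
  have hcoef : α⁻¹ * (1 - (1-ω*α)^N) = τ := by
    have hgs := geom_sum_mul (1-ω*α) N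
    have h5 : 1 - (1-ω*α)^N = α * (ω * ∑ k ∈ Finset.range N, (1-ω*α)^k) := by
      linear_combination hgs
    rw [h5, ← mul_assoc, inv_mul_cancel₀ hα0', one_mul, hgα]
  rw [hUN, hMinv, hsub, proj_combo_mul hPP, mul_zero, zero_smul, add_zero, hcoef]

end AuxMatrix

private lemma econst_at_smul_proj (n : ℕ) (hn : 1 ≤ n) (μ θ σ τ : ℝ) :
    Econst n μ θ σ (τ • Matrix.of (fun _ _ : Fin n => (1:ℝ)/n))
      = (μ^2+θ^2)/2 * (n:ℝ) * (τ - 1)^2 + σ^2/2 * τ^2 := by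
  have hn0 : (0:ℝ) < n := by exact_mod_cast hn
  unfold Econst
  have hrow : ∀ i : Fin n,
      ((τ • Matrix.of (fun _ _ : Fin n => (1:ℝ)/n) - 1).mulVec (fun _ : Fin n => 1)) i
        = τ - 1 := by
    intro i
    simp only [Matrix.mulVec, dotProduct, Matrix.sub_apply, Matrix.smul_apply, Matrix.of_apply,
      Matrix.one_apply, smul_eq_mul, mul_one]
    rw [Finset.sum_sub_distrib]
    rw [Finset.sum_const, Finset.card_univ, Fintype.card_fin, nsmul_eq_mul]
    simp only [Finset.sum_ite_eq, Finset.mem_univ, if_true]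
    field_simp
  have h1 : (∑ i, ((τ • Matrix.of (fun _ _ : Fin n => (1:ℝ)/n) - 1).mulVec
      (fun _ : Fin n => 1) i) ^ 2) = n * (τ - 1)^2 := by
    rw [Finset.sum_congr rfl fun i _ => by rw [hrow i]]
    rw [Finset.sum_const, Finset.card_univ, Fintype.card_fin, nsmul_eq_mul]
  have h2 : (∑ i, ∑ j, ((τ • Matrix.of (fun _ _ : Fin n => (1:ℝ)/n)) i j) ^ 2 : ℝ)
      = τ^2 := by
    simp only [Matrix.smul_apply, Matrix.of_apply, smul_eq_mul]
    rw [Finset.sum_congr rfl fun i _ => Finset.sum_const _]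
    rw [Finset.sum_const, Finset.card_univ, Fintype.card_fin]
    simp only [nsmul_eq_mul]
    field_simp
  rw [h1, h2]
  ring

private lemma econst_lower_aux (n N : ℕ) (hn : 1 ≤ n) (hN : Even N) {ω : ℝ} (hω0 : 0 < ω)
    (μ θ σ : ℝ) (hσ : 0 < σ) (R : Matrix (Fin n) (Fin n) ℝ) :
    (μ^2+θ^2)/2 * (n:ℝ) *
        (min ((μ^2+θ^2)/2 * (n:ℝ) / ((μ^2+θ^2)/2 * (n:ℝ) + σ^2/2)) (1-(1-ω)^N) - 1)^2
      + σ^2/2 * (min ((μ^2+θ^2)/2 * (n:ℝ) / ((μ^2+θ^2)/2 * (n:ℝ) + σ^2/2)) (1-(1-ω)^N))^2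
      ≤ Econst n μ θ σ ((1 + Rᵀ * R)⁻¹ * (1 - (1 - ω • (1 + Rᵀ * R)) ^ N)) := by
  have hn0 : (0:ℝ) < n := by exact_mod_cast hn
  set a : ℝ := (μ^2+θ^2)/2 with hadef
  set b : ℝ := σ^2/2 with hbdef
  have ha : 0 ≤ a := by positivity
  have hb : 0 < b := by positivity
  set T : Matrix (Fin n) (Fin n) ℝ :=
    (1 + Rᵀ * R)⁻¹ * (1 - (1 - ω • (1 + Rᵀ * R)) ^ N) with hTdef
  set s : ℝ := ∑ i, ∑ j, T i j with hsdef
  -- the trace-type bound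
  have hs : s ≤ (1 - (1-ω)^N) * n := by
    have hkey := key_quad_bound hN hω0 R (fun _ => (1:ℝ))
    rw [← hTdef] at hkey
    have hlhs : (fun _ : Fin n => (1:ℝ)) ⬝ᵥ (T *ᵥ (fun _ : Fin n => (1:ℝ))) = s := by
      simp [dotProduct, Matrix.mulVec, hsdef]
    have hrhs : (fun _ : Fin n => (1:ℝ)) ⬝ᵥ (fun _ : Fin n => (1:ℝ)) = (n:ℝ) := by
      simp [dotProduct]
    rw [hlhs, hrhs] at hkey
    exact hkey
  -- row description
  have hrow : ((T - 1).mulVec (fun _ : Fin n => 1)) = fun i => (∑ j, T i j) - 1 := by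
    funext i
    simp only [Matrix.mulVec, dotProduct, Matrix.sub_apply, Matrix.one_apply, mul_one]
    rw [Finset.sum_sub_distrib]
    simp [Finset.sum_ite_eq]
  -- Cauchy-Schwarz bounds
  have h1 : (s - n)^2 ≤ (n:ℝ) * ∑ i, ((∑ j, T i j) - 1)^2 := by
    have hcs := sq_sum_le_card_mul_sum_sq (s := Finset.univ)
      (f := fun i : Fin n => (∑ j, T i j) - 1)
    have hsum : ∑ i : Fin n, ((∑ j, T i j) - 1) = s - n := by
      rw [Finset.sum_sub_distrib, Finset.sum_const, Finset.card_univ, Fintype.card_fin,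
        nsmul_eq_mul, mul_one, hsdef]
    rw [hsum] at hcs
    simpa using hcs
  have h2 : s^2 ≤ (n:ℝ)^2 * ∑ i, ∑ j, T i j ^ 2 := by
    have hcs1 := sq_sum_le_card_mul_sum_sq (s := Finset.univ)
      (f := fun i : Fin n => ∑ j, T i j)
    have hcs2 : ∀ i : Fin n, (∑ j, T i j)^2 ≤ (n:ℝ) * ∑ j, T i j ^ 2 := by
      intro i
      have := sq_sum_le_card_mul_sum_sq (s := Finset.univ) (f := fun j : Fin n => T i j)
      simpa using this
    have hstep : ∑ i : Fin n, (∑ j, T i j)^2 ≤ (n:ℝ) * ∑ i, ∑ j, T i j ^ 2 := by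
      calc ∑ i : Fin n, (∑ j, T i j)^2 ≤ ∑ i : Fin n, (n:ℝ) * ∑ j, T i j ^ 2 :=
            Finset.sum_le_sum fun i _ => hcs2 i
        _ = (n:ℝ) * ∑ i, ∑ j, T i j ^ 2 := by rw [← Finset.mul_sum]
    calc s^2 ≤ (n:ℝ) * ∑ i : Fin n, (∑ j, T i j)^2 := by simpa [hsdef] using hcs1
      _ ≤ (n:ℝ) * ((n:ℝ) * ∑ i, ∑ j, T i j ^ 2) := by
          exact mul_le_mul_of_nonneg_left hstep hn0.le
      _ = (n:ℝ)^2 * ∑ i, ∑ j, T i j ^ 2 := by ring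
  -- put together
  have hmain := final_scalar (ρ := 1 - (1-ω)^N) ha hb hn0 hs
  have hE1 : a * (s - (n:ℝ))^2 / n ≤ a * ∑ i, ((T - 1).mulVec (fun _ : Fin n => 1) i) ^ 2 := by
    rw [hrow]
    have : (s - (n:ℝ))^2 / n ≤ ∑ i, ((∑ j, T i j) - 1)^2 := by
      rw [div_le_iff₀ hn0]
      linarith [h1]
    calc a * (s - (n:ℝ))^2 / n = a * ((s - (n:ℝ))^2 / n) := by ring
      _ ≤ a * ∑ i, ((∑ j, T i j) - 1)^2 := mul_le_mul_of_nonneg_left this ha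
  have hE2 : b * s^2 / (n:ℝ)^2 ≤ b * ∑ i, ∑ j, T i j ^ 2 := by
    have : s^2 / (n:ℝ)^2 ≤ ∑ i, ∑ j, T i j ^ 2 := by
      rw [div_le_iff₀ (by positivity)]
      linarith [h2]
    calc b * s^2 / (n:ℝ)^2 = b * (s^2 / (n:ℝ)^2) := by ring
      _ ≤ b * ∑ i, ∑ j, T i j ^ 2 := mul_le_mul_of_nonneg_left this hb.le
  unfold Econst

  calc a * (n:ℝ) * (min (a * (n:ℝ) / (a * (n:ℝ) + b)) (1-(1-ω)^N) - 1)^2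
        + b * (min (a * (n:ℝ) / (a * (n:ℝ) + b)) (1-(1-ω)^N))^2
      ≤ a * (s - (n:ℝ))^2 / n + b * s^2 / (n:ℝ)^2 := hmain
    _ ≤ a * (∑ i, ((T - 1).mulVec (fun _ : Fin n => 1) i) ^ 2) + b * ∑ i, ∑ j, T i j ^ 2 := by
        linarith [hE1, hE2]

/-- Best unrolling risk, random constant vectors, `N` even, `k = n`:
with `C₁ = n(μ²+θ²)/(n(μ²+θ²)+σ²)`, `ρ_{N,ω} = 1 − (1−ω)^N` and
`C₁min = min{C₁, ρ_{N,ω}}`, the minimum of `E_const` over `B_{N,n,ω}` is attained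
and equals `((μ²+θ²)/2)·n·(C₁min − 1)² + (σ²/2)·C₁min²`. -/
theorem best_unrolling_const_even_k_eq_n (n N : ℕ) (hn : 1 ≤ n)
    (hN : Even N) (hN2 : 2 ≤ N) (ω : ℝ) (hω0 : 0 < ω) (hω2 : ω < 2)
    (μ θ : ℝ) (σ : ℝ) (hσ : 0 < σ) :
    IsLeast (Econst n μ θ σ '' unrollingSet N n n ω)
      ((μ ^ 2 + θ ^ 2) / 2 * (n : ℝ) *
          (min ((n : ℝ) * (μ ^ 2 + θ ^ 2) / ((n : ℝ) * (μ ^ 2 + θ ^ 2) + σ ^ 2))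
              (1 - (1 - ω) ^ N) - 1) ^ 2
        + σ ^ 2 / 2 *
            (min ((n : ℝ) * (μ ^ 2 + θ ^ 2) / ((n : ℝ) * (μ ^ 2 + θ ^ 2) + σ ^ 2))
              (1 - (1 - ω) ^ N)) ^ 2) := by
  have hn0 : (0:ℝ) < n := by exact_mod_cast hn
  -- rewrite C₁
  have hCeq : (n : ℝ) * (μ ^ 2 + θ ^ 2) / ((n : ℝ) * (μ ^ 2 + θ ^ 2) + σ ^ 2)
      = (μ^2+θ^2)/2 * (n:ℝ) / ((μ^2+θ^2)/2 * (n:ℝ) + σ^2/2) := by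
    rw [div_eq_div_iff (by positivity) (by positivity)]
    ring
  rw [hCeq]
  set a : ℝ := (μ^2+θ^2)/2 with hadef
  set b : ℝ := σ^2/2 with hbdef
  set ρ : ℝ := 1 - (1-ω)^N with hρdef
  set τ : ℝ := min (a * (n:ℝ) / (a * (n:ℝ) + b)) ρ with hτdef
  have hρ0 : 0 < ρ := by
    have habs : |1 - ω| < 1 := abs_lt.mpr ⟨by linarith, by linarith⟩
    have h1 : (1-ω)^N ≤ |1-ω|^N := by
      rw [← abs_pow]
      exact le_abs_self _
    have h2 : |1-ω|^N < 1 := pow_lt_one₀ (abs_nonneg _) habs (by omega)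
    rw [hρdef]
    linarith
  have hτ0 : 0 ≤ τ := by
    apply le_min
    · positivity
    · exact hρ0.le
  have hτρ : τ ≤ ρ := min_le_right _ _
  constructor
  · -- membership
    obtain ⟨R, hR⟩ := witness_exists (n := n) hn hN hω0 hω2 hτ0 hτρ
    refine ⟨(1 + Rᵀ * R)⁻¹ * (1 - (1 - ω • (1 + Rᵀ * R)) ^ N), ⟨R, rfl⟩, ?_⟩
    rw [hR, econst_at_smul_proj n hn μ θ σ τ]
  · -- lower bound
    rintro x ⟨T, ⟨R, rfl⟩, rfl⟩
    exact econst_lower_aux n N hn hN hω0 μ θ σ hσ R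
end
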